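/- arXiv:2105.04370 — 6 statements merged into one kernel-verified Lean document; each statement's English description precedes it below -/
import Mathlib

section
/- Let q be an odd prime power and let f(x_1,...,x_n) be a non-degenerate quadratic form over F_q in an odd number n of indeterminates with determinant Δ. Then for each c ∈ F_q, the number of solutions of f(x_1,...,x_n) = c in F_q^n equals q^{n-1} + q^{(n-1)/2} η((-1)^{(n-1)/2} c Δ), where η is the quadratic character of F_q extended by η(0) = 0. -/
/-!
Splitting off the last two variables, the number of solutions of `f(x) + a y² + b z² = c` is the
additive convolution of the solution counts of `f` and of the binary form `a y² + b z²`. The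
binary form takes the value `e` exactly `q + η(-ab) (q·[e = 0] - 1)` times (a Jacobi sum
computation, starting from the one-variable count `1 + η(a e)`), and the counts of `f` add up to
`q^n`; so `N_{n+2}(c) = q^{n+1} + η(-ab) (q N_n(c) - q^n)`, and induction over odd `n` from
`N_1(c) = 1 + η(a c)` gives the formula.
-/

open Finset

section FiberCard

variable {α β M : Type*}

noncomputable def fiberCard (g : α → M) (c : M) : ℕ :=
  Nat.card {x // g x = c}

theorem fiberCard_comp_equiv {γ : Type*} (e : γ ≃ α) (g : α → M) (c : M) :
    fiberCard (g ∘ e) c = fiberCard g c :=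
  Nat.card_congr (e.subtypeEquiv fun _ => Iff.rfl)

variable [Fintype α] [Fintype M] [DecidableEq M]

theorem sum_comp_eq_sum_fiberCard_mul {R : Type*} [CommSemiring R] (g : α → M) (F : M → R) :
    ∑ x, F (g x) = ∑ d, (fiberCard g d : R) * F d := by
  rw [← Fintype.sum_fiberwise' g F]
  simp [fiberCard, Nat.card_eq_fintype_card]

theorem sum_fiberCard (g : α → M) : ∑ d, fiberCard g d = Fintype.card α := by
  simpa using (sum_comp_eq_sum_fiberCard_mul (R := ℕ) g (fun _ => 1)).symm

theorem fiberCard_add [Fintype β] [AddCommGroup M] (g : α → M) (h : β → M) (c : M) :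
    fiberCard (fun p : α × β => g p.1 + h p.2) c
      = ∑ d, fiberCard g d * fiberCard h (c - d) := by
  have e : {p : α × β // g p.1 + h p.2 = c} ≃ Σ x, {y // h y = c - g x} :=
    Equiv.subtypeProdEquivSigmaSubtype (fun x y => g x + h y = c) |>.trans
      (Equiv.sigmaCongrRight fun x => Equiv.subtypeEquivRight fun y => by
        rw [eq_sub_iff_add_eq'])
  rw [fiberCard, Nat.card_congr e, Nat.card_sigma]
  exact sum_comp_eq_sum_fiberCard_mul g (fun d => fiberCard h (c - d))

end FiberCard

section QuadraticCharSums

variable {F : Type*} [Field F] [Fintype F] [DecidableEq F]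

theorem quadraticChar_mul_sq (x : F) {u : F} (hu : u ≠ 0) :
    quadraticChar F (x * u ^ 2) = quadraticChar F x := by
  rw [map_mul, quadraticChar_sq_one' hu, mul_one]

variable (hF : ringChar F ≠ 2)
include hF

theorem sum_quadraticChar_sub (c : F) : ∑ x, quadraticChar F (c - x) = 0 := by
  rw [← quadraticChar_sum_zero hF]
  exact Fintype.sum_equiv (Equiv.subLeft c) _ _ fun _ => rfl

theorem sum_quadraticChar_mul_sub (c : F) :
    ∑ x, quadraticChar F (x * (c - x))
      = quadraticChar F (-1) * ((if c = 0 then (Fintype.card F : ℤ) else 0) - 1) := by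
  rcases eq_or_ne c 0 with rfl | hc
  · have h : ∀ x : F,
        quadraticChar F (x * (0 - x)) = if x = 0 then 0 else quadraticChar F (-1) := by
      intro x
      split_ifs with hx
      · simp [hx]
      · rw [show x * (0 - x) = -1 * x ^ 2 by ring, quadraticChar_mul_sq _ hx]
    rw [Fintype.sum_congr _ _ h, Finset.sum_ite]
    simp only [sum_const_zero, zero_add, filter_ne', sum_const, card_erase_of_mem (mem_univ _),
      card_univ, nsmul_eq_mul, Nat.cast_sub Fintype.card_pos, Nat.cast_one, if_pos]
    ring
  · -- substituting `x = c t` turns the sum into the Jacobi sum `J(η, η) = -η(-1)`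
    have hJ : jacobiSum (quadraticChar F) (quadraticChar F) = -quadraticChar F (-1) := by
      simpa [(quadraticChar_isQuadratic F).inv] using
        jacobiSum_nontrivial_inv (quadraticChar_ne_one hF)
    rw [if_neg hc, ← Fintype.sum_bijective (c * ·) (mulLeft_bijective₀ c hc)
      (fun t => quadraticChar F (t * (1 - t))) _ fun t => by
        rw [show c * t * (c - c * t) = t * (1 - t) * c ^ 2 by ring, quadraticChar_mul_sq _ hc]]
    simpa [jacobiSum, map_mul] using hJ

end QuadraticCharSums

section DiagonalForm

def diagForm {R : Type*} [CommSemiring R] {n : ℕ} (a : Fin n → R) (x : Fin n → R) : R :=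
  ∑ i, a i * x i ^ 2

theorem diagForm_append {R : Type*} [CommSemiring R] {m n : ℕ} (a : Fin (m + n) → R)
    (y : Fin m → R) (z : Fin n → R) :
    diagForm a (Fin.append y z)
      = diagForm (a ∘ Fin.castAdd n) y + diagForm (a ∘ Fin.natAdd m) z := by
  simp [diagForm, Fin.sum_univ_add]

theorem fiberCard_diagForm_append {R : Type*} [CommRing R] [Fintype R] [DecidableEq R] {m n : ℕ}
    (a : Fin (m + n) → R) (c : R) :
    fiberCard (diagForm a) c = ∑ d, fiberCard (diagForm (a ∘ Fin.castAdd n)) d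
      * fiberCard (diagForm (a ∘ Fin.natAdd m)) (c - d) := by
  rw [← fiberCard_add, ← fiberCard_comp_equiv (Fin.appendEquiv m n)]
  congr 1
  ext p
  exact diagForm_append a p.1 p.2

variable {F : Type*} [Field F] [Fintype F] [DecidableEq F] (hF : ringChar F ≠ 2)
include hF

theorem fiberCard_diagForm_one (a : Fin 1 → F) (ha : ∀ i, a i ≠ 0) (c : F) :
    (fiberCard (diagForm a) c : ℤ) = 1 + quadraticChar F (a 0 * c) := by
  have e : {x : Fin 1 → F // diagForm a x = c} ≃ {t : F | t ^ 2 = c / a 0} :=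
    (Equiv.funUnique (Fin 1) F).subtypeEquiv fun x => by
      simp [diagForm, eq_div_iff (ha 0), mul_comm]
  rw [fiberCard, Nat.card_congr e, Nat.card_eq_card_toFinset, quadraticChar_card_sqrts hF,
    add_comm, ← quadraticChar_mul_sq (c / a 0) (ha 0)]
  congr 2
  field_simp

theorem fiberCard_diagForm_two (a : Fin 2 → F) (ha : ∀ i, a i ≠ 0) (c : F) :
    (fiberCard (diagForm a) c : ℤ) = Fintype.card F
      + quadraticChar F (-(a 0 * a 1)) * ((if c = 0 then (Fintype.card F : ℤ) else 0) - 1) := by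
  have expand : ∀ d, (1 + quadraticChar F (a 0 * d)) * (1 + quadraticChar F (a 1 * (c - d)))
      = 1 + quadraticChar F (a 0) * quadraticChar F d
        + quadraticChar F (a 1) * quadraticChar F (c - d)
        + quadraticChar F (a 0 * a 1) * quadraticChar F (d * (c - d)) := by
    intro d
    simp only [map_mul]
    ring
  rw [fiberCard_diagForm_append (m := 1) (n := 1) a c]
  push_cast
  simp only [fiberCard_diagForm_one hF (a ∘ Fin.castAdd 1) (fun _ => ha _),
    fiberCard_diagForm_one hF (a ∘ Fin.natAdd 1) (fun _ => ha _)]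
  change ∑ d, (1 + quadraticChar F (a 0 * d)) * (1 + quadraticChar F (a 1 * (c - d))) = _
  simp_rw [expand]
  rw [sum_add_distrib, sum_add_distrib, sum_add_distrib, ← mul_sum, ← mul_sum, ← mul_sum,
    quadraticChar_sum_zero hF, sum_quadraticChar_sub hF, sum_quadraticChar_mul_sub hF,
    neg_eq_neg_one_mul (a 0 * a 1), map_mul _ (-1)]
  simp only [sum_const, card_univ, nsmul_eq_mul, mul_one, mul_zero, add_zero]
  ring

theorem fiberCard_diagForm_add_two {n : ℕ} (a : Fin (n + 2) → F) (ha : ∀ i, a i ≠ 0)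
    (c : F) :
    (fiberCard (diagForm a) c : ℤ) = Fintype.card F ^ (n + 1)
      + quadraticChar F (-(a (Fin.natAdd n 0) * a (Fin.natAdd n 1))) *
        (Fintype.card F * fiberCard (diagForm (a ∘ Fin.castAdd 2)) c - Fintype.card F ^ n) := by
  set q : ℤ := (Fintype.card F : ℤ)
  set N : F → ℤ := fun d => fiberCard (diagForm (a ∘ Fin.castAdd 2)) d
  set K : ℤ := quadraticChar F (-(a (Fin.natAdd n 0) * a (Fin.natAdd n 1)))
  have hsum : ∑ d, N d = q ^ n := by
    simp only [N, q]
    exact_mod_cast (sum_fiberCard _).trans (by simp)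
  have expand : ∀ d, N d * (q + K * ((if c - d = 0 then q else 0) - 1))
      = q * N d + K * (if c = d then q * N d else 0) - K * N d := by
    intro d
    simp only [sub_eq_zero]
    split_ifs <;> ring
  rw [fiberCard_diagForm_append (m := n) (n := 2)]
  push_cast
  simp only [fiberCard_diagForm_two hF (a ∘ Fin.natAdd n) (fun _ => ha _)]
  change ∑ d, N d * (q + K * ((if c - d = 0 then q else 0) - 1)) = _
  simp_rw [expand]
  rw [sum_sub_distrib, sum_add_distrib, ← mul_sum, ← mul_sum, ← mul_sum, sum_ite_eq, hsum]
  simp only [mem_univ, if_true]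
  ring

theorem fiberCard_diagForm_odd (m : ℕ) (a : Fin (2 * m + 1) → F) (ha : ∀ i, a i ≠ 0)
    (c : F) :
    (fiberCard (diagForm a) c : ℤ) = Fintype.card F ^ (2 * m)
      + Fintype.card F ^ m * quadraticChar F ((-1) ^ m * c * ∏ i, a i) := by
  induction m with
  | zero => simpa [mul_comm] using fiberCard_diagForm_one hF a ha c
  | succ m ih =>
    have hprod : ∏ i, a i = (∏ i : Fin (2 * m + 1), (a ∘ Fin.castAdd 2) i)
        * (a (Fin.natAdd (2 * m + 1) (0 : Fin 2)) * a (Fin.natAdd (2 * m + 1) (1 : Fin 2))) :=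
      (Fin.prod_univ_add (a := 2 * m + 1) (b := 2) a).trans (by rw [Fin.prod_univ_two]; rfl)
    have harg : quadraticChar F ((-1) ^ (m + 1) * c * ∏ i, a i)
        = quadraticChar F
            (-(a (Fin.natAdd (2 * m + 1) (0 : Fin 2)) * a (Fin.natAdd (2 * m + 1) (1 : Fin 2))))
          * quadraticChar F ((-1) ^ m * c * ∏ i : Fin (2 * m + 1), (a ∘ Fin.castAdd 2) i) := by
      rw [← map_mul, hprod]
      congr 1
      ring
    refine (fiberCard_diagForm_add_two hF (n := 2 * m + 1) a ha c).trans ?_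
    rw [ih (a ∘ Fin.castAdd 2) (fun _ => ha _), harg]
    ring

end DiagonalForm

/-- for a non-degenerate diagonal quadratic form
`f(x) = ∑ aᵢ xᵢ²` in an odd number `n` of variables over `F_q` (`q` odd), the number
of solutions of `f(x) = c` is `q^{n-1} + q^{(n-1)/2} η((-1)^{(n-1)/2} c Δ)`. -/
theorem stmt_6 (Fq : Type*) [Field Fq] [Fintype Fq] [DecidableEq Fq]
    (hodd : ringChar Fq ≠ 2) (n : ℕ) (hn : Odd n)
    (a : Fin n → Fq) (ha : ∀ i, a i ≠ 0) (c : Fq) :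
    (Nat.card {x : Fin n → Fq // ∑ i, a i * x i ^ 2 = c} : ℤ)
      = (Fintype.card Fq : ℤ) ^ (n - 1)
        + (Fintype.card Fq : ℤ) ^ ((n - 1) / 2)
          * quadraticChar Fq ((-1) ^ ((n - 1) / 2) * c * ∏ i, a i) := by
  obtain ⟨m, rfl⟩ := hn
  rw [Nat.add_sub_cancel, Nat.mul_div_cancel_left m two_pos]
  exact fiberCard_diagForm_odd hodd m a ha c
end

section
/- Let p be an odd prime, q = p^m, and let C be the F_p-linear code C = { (Tr(a x^2 + b x))_{x ∈ F_q^*} : a, b ∈ F_q } ⊆ F_p^{q-1}. Then C has length q-1 and dimension 2m over F_p. -/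
/-!
The code is the image of the `F_p`-linear map `(a, b) ↦ (Tr(a x² + b x))_{x ≠ 0}`, so its
dimension is `2m` once this map is injective. If every coordinate vanishes, then
`Tr(a x² + b x) = 0` for all `x` (trivially at `x = 0`), and polarizing gives `Tr(2 a x y) = 0`
for all `x, y`. Since the trace form of the separable extension `F / F_p` is nondegenerate and
`2 ≠ 0` in odd characteristic, `a = 0`, and then `Tr(b x) = 0` for all `x` gives `b = 0`.
-/

open Module

section QuadraticTraceCode

variable (K L : Type*) [Field K] [Field L] [Algebra K L]

noncomputable def quadraticTraceCode : (L × L) →ₗ[K] ({x : L // x ≠ 0} → K) where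
  toFun ab x := Algebra.trace K L (ab.1 * x.val ^ 2 + ab.2 * x.val)
  map_add' u v := by
    funext x
    simp only [Prod.fst_add, Prod.snd_add, add_mul, Pi.add_apply, ← map_add]
    ring_nf
  map_smul' c u := by
    funext x
    simp only [Prod.smul_fst, Prod.smul_snd, smul_mul_assoc, ← smul_add, map_smul,
      RingHom.id_apply, Pi.smul_apply]

variable {K L}

theorem trace_two_mul_mul_mul_eq_zero {a b : L}
    (h : ∀ x : L, Algebra.trace K L (a * x ^ 2 + b * x) = 0) (x y : L) :
    Algebra.trace K L (2 * a * x * y) = 0 := by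
  have expand : a * (x + y) ^ 2 + b * (x + y) =
      (a * x ^ 2 + b * x) + (a * y ^ 2 + b * y) + 2 * a * x * y := by ring
  simpa [expand, h x, h y] using h (x + y)

theorem eq_zero_of_trace_mul_eq_zero [FiniteDimensional K L] [Algebra.IsSeparable K L] {a : L}
    (h : ∀ y : L, Algebra.trace K L (a * y) = 0) : a = 0 :=
  (traceForm_nondegenerate K L).1 a fun y => by simpa [Algebra.traceForm_apply] using h y

theorem quadraticTraceCode_injective [FiniteDimensional K L] [Algebra.IsSeparable K L]
    (h2 : (2 : L) ≠ 0) : Function.Injective (quadraticTraceCode K L) := by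
  rw [← LinearMap.ker_eq_bot, Submodule.eq_bot_iff]
  rintro ⟨a, b⟩ hab
  have vanish : ∀ x : L, Algebra.trace K L (a * x ^ 2 + b * x) = 0 := by
    intro x
    by_cases hx : x = 0
    · simp [hx]
    · exact congrFun hab ⟨x, hx⟩
  have ha : a = 0 := by
    have h2a : 2 * a = 0 :=
      eq_zero_of_trace_mul_eq_zero fun y => by
        simpa using trace_two_mul_mul_mul_eq_zero vanish 1 y
    exact (mul_eq_zero.mp h2a).resolve_left h2
  have hb : b = 0 :=
    eq_zero_of_trace_mul_eq_zero fun y => by simpa [ha, mul_comm] using vanish y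
  simp [ha, hb]

theorem finrank_quadraticTraceCode_range [FiniteDimensional K L] [Algebra.IsSeparable K L]
    (h2 : (2 : L) ≠ 0) :
    finrank K (LinearMap.range (quadraticTraceCode K L)) = 2 * finrank K L := by
  rw [LinearMap.finrank_range_of_inj (quadraticTraceCode_injective h2), finrank_prod, two_mul]

end QuadraticTraceCode

theorem two_ne_zero_of_algebra_zmod {p : ℕ} [Fact p.Prime] (hodd : p ≠ 2)
    (F : Type*) [Field F] [Algebra (ZMod p) F] : (2 : F) ≠ 0 := by
  have : (2 : ZMod p) ≠ 0 := Ring.two_ne_zero (by rwa [ZMod.ringChar_zmod_n])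
  have h := (algebraMap (ZMod p) F).injective.ne this
  rwa [map_ofNat, map_zero] at h

theorem stmt_7_general (p m : ℕ) (hp : p.Prime) (hodd : p ≠ 2)
    (F : Type*) [Field F] [Fintype F] [Algebra (ZMod p) F]
    (hcard : Fintype.card F = p ^ m)
    (C : Submodule (ZMod p) ({x : F // x ≠ 0} → ZMod p))
    (hC : (C : Set ({x : F // x ≠ 0} → ZMod p)) =
      {w | ∃ a b : F, w = fun x => Algebra.trace (ZMod p) F (a * x.val ^ 2 + b * x.val)}) :
    Nat.card {x : F // x ≠ 0} = p ^ m - 1 ∧ Module.finrank (ZMod p) C = 2 * m := by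
  have : Fact p.Prime := ⟨hp⟩
  have hC_range : C = LinearMap.range (quadraticTraceCode (ZMod p) F) := by
    ext w
    rw [← SetLike.mem_coe, hC]
    exact ⟨fun ⟨a, b, hw⟩ => ⟨(a, b), hw.symm⟩, fun ⟨ab, hw⟩ => ⟨ab.1, ab.2, hw.symm⟩⟩
  have hfinrank : finrank (ZMod p) F = m := by
    have := FiniteField.pow_finrank_eq_natCard p F
    rw [Nat.card_eq_fintype_card, hcard] at this
    exact Nat.pow_right_injective hp.two_le this
  constructor
  · classical
    rw [Nat.card_eq_fintype_card, Fintype.card_subtype_compl, hcard]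
    simp
  · rw [hC_range, finrank_quadraticTraceCode_range (two_ne_zero_of_algebra_zmod hodd F), hfinrank]

/-- the `F_p`-linear code `C = {(Tr(ax² + bx))_{x ∈ F_q^*} : a, b ∈ F_q}`
has length `q - 1` and dimension `2m`. -/
theorem stmt_7 (p m : ℕ) (hp : p.Prime) (hodd : p ≠ 2) (hm : 0 < m)
    (F : Type*) [Field F] [Fintype F] [Algebra (ZMod p) F]
    (hcard : Fintype.card F = p ^ m)
    (C : Submodule (ZMod p) ({x : F // x ≠ 0} → ZMod p))
    (hC : (C : Set ({x : F // x ≠ 0} → ZMod p)) =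
      {w | ∃ a b : F, w = fun x => Algebra.trace (ZMod p) F (a * x.val ^ 2 + b * x.val)}) :
    Nat.card {x : F // x ≠ 0} = p ^ m - 1 ∧ Module.finrank (ZMod p) C = 2 * m :=
  stmt_7_general p m hp hodd F hcard C hC
end

section
/- Let p be an odd prime, q = p^m with m odd, and let C = { (Tr(a x^2 + b x))_{x ∈ F_q^*} : a, b ∈ F_q } ⊆ F_p^{q-1}. Then the minimum distance of C is (p-1)p^{m-1} - p^{(m-1)/2}. -/
/-!
Let `c = p ^ (m - 1)` be the size of each fibre of the trace, `η` the quadratic character of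
`F_q` and `T s = ∑_{Tr z = s} η z`. Completing the square, `x ↦ Tr (a x² + b x)` with `a ≠ 0`
has `c + η a * T (Tr (a (b / 2a)²))` zeros in `F_q`, and `c` zeros when `a = 0 ≠ b`.
Since `η` is the quadratic character of `F_p` composed with the norm and `m` is odd, `η`
restricts to the quadratic character of `F_p`; hence `T (t s) = η t * T s`, so `T 0 = 0` and
`T s = η s * T 1`, and expanding `∑ s, T s ^ 2` gives `T 1 ^ 2 = c`. So a nonzero codeword
vanishes at most `c + p ^ ((m - 1) / 2)` times on `F_q`, with equality for a suitable `a, b`,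
and its weight is `q` minus its number of zeros.
-/

open Finset

theorem natCard_punctured_support_eq {α R : Type*} [Zero α] [Fintype α] [Zero R] [DecidableEq R]
    (g : α → R) (hg : g 0 = 0) :
    Nat.card {x : {x : α // x ≠ 0} // g x ≠ 0} = Fintype.card α - #{x | g x = 0} := by
  have hsupp {x : α} (hx : g x ≠ 0) : x ≠ 0 := by rintro rfl; exact hx hg
  rw [Nat.card_congr (Equiv.subtypeSubtypeEquivSubtype hsupp), Nat.card_eq_fintype_card,
    Fintype.card_subtype, ← card_univ,
    ← card_filter_add_card_filter_not (fun x => g x = 0) (s := univ)]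
  simp

theorem Nat.pow_sub_one_add_pow_lt_pow {r n k : ℕ} (hr : 3 ≤ r) (hn : n ≠ 0) (hk : k ≤ n - 1) :
    r ^ (n - 1) + r ^ k < r ^ n := by
  have hrk : r ^ k ≤ r ^ (n - 1) := Nat.pow_le_pow_right (by omega) hk
  have h1 : 1 ≤ r ^ (n - 1) := Nat.one_le_pow _ _ (by omega)
  have h3 : 3 * r ^ (n - 1) ≤ r ^ n := by
    rw [← Nat.sub_one_add_one hn, pow_succ', Nat.add_sub_cancel]
    exact Nat.mul_le_mul_right _ hr
  omega

section TraceFibers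

variable {K F : Type*} [Field K] [Fintype K] [DecidableEq K] [Field F] [Fintype F] [Algebra K F]

theorem card_filter_trace_eq (s : K) :
    #{z : F | Algebra.trace K F z = s} = Fintype.card K ^ (Module.finrank K F - 1) := by
  have hfiber (t : K) : #{z : F | Algebra.trace K F z = t} = #{z : F | Algebra.trace K F z = s} :=
    AddMonoidHom.card_fiber_eq_of_mem_range (Algebra.trace K F)
      (Algebra.trace_surjective K F t) (Algebra.trace_surjective K F s)
  have hsum : ∑ t : K, #{z : F | Algebra.trace K F z = t} = Fintype.card F :=
    (card_eq_sum_card_fiberwise fun _ _ => mem_univ _).symm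
  rw [sum_congr rfl fun t _ => hfiber t, sum_const, card_univ, smul_eq_mul,
    Module.card_eq_pow_finrank (K := K) (V := F), ← Nat.sub_one_add_one Module.finrank_pos.ne',
    pow_succ'] at hsum
  exact Nat.eq_of_mul_eq_mul_left Fintype.card_pos hsum

theorem card_filter_trace_mul_eq {v : F} (hv : v ≠ 0) (s : K) :
    #{z : F | Algebra.trace K F (v * z) = s} = Fintype.card K ^ (Module.finrank K F - 1) := by
  rw [← card_filter_trace_eq s]
  exact card_equiv (Equiv.mulLeft₀ v hv) fun z => by simp

end TraceFibers

section QuadraticChar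

variable {K F : Type*} [Field K] [Fintype K] [DecidableEq K] [Field F] [Fintype F] [DecidableEq F]
  [Algebra K F]

/-- Euler's criterion on both sides: with `r = card K` and `q = card F`, the norm of `x` is
`x ^ ((q - 1) / (r - 1))`, and `q / 2 = (q - 1) / (r - 1) * (r / 2)` as `q = r ^ n` is odd. -/
theorem quadraticChar_norm (hK : ringChar K ≠ 2) (x : F) :
    quadraticChar K (Algebra.norm K x) = quadraticChar F x := by
  have hF : ringChar F ≠ 2 := Algebra.ringChar_eq K F ▸ hK
  refine (quadraticChar_isQuadratic K).eq_of_eq_coe (quadraticChar_isQuadratic F) hF ?_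
  rw [← map_intCast (algebraMap K F), quadraticChar_eq_pow_of_char_ne_two' hK,
    quadraticChar_eq_pow_of_char_ne_two' hF, map_pow, FiniteField.algebraMap_norm_eq_pow,
    ← pow_mul, Nat.card_eq_fintype_card, Nat.card_eq_fintype_card]
  congr 1
  have hq : 0 < Fintype.card F := Fintype.card_pos
  have hr := FiniteField.odd_card_of_char_ne_two hK
  have hr1 : 1 < Fintype.card K := Fintype.one_lt_card
  obtain ⟨N, hN⟩ : Fintype.card K - 1 ∣ Fintype.card F - 1 := by
    rw [Module.card_eq_pow_finrank (K := K) (V := F)]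
    exact Nat.sub_one_dvd_pow_sub_one _ _
  rw [hN, Nat.mul_div_cancel_left _ (by omega)]
  obtain ⟨e, he⟩ : ∃ e, Fintype.card K = 2 * e + 1 := ⟨Fintype.card K / 2, by omega⟩
  rw [he, Nat.add_sub_cancel, mul_assoc] at hN
  rw [he, Nat.mul_add_div two_pos, Nat.div_eq_of_lt one_lt_two, add_zero, mul_comm]
  omega

theorem quadraticChar_algebraMap_of_odd_finrank (hK : ringChar K ≠ 2)
    (hn : Odd (Module.finrank K F)) (t : K) :
    quadraticChar F (algebraMap K F t) = quadraticChar K t := by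
  rw [← quadraticChar_norm hK, Algebra.norm_algebraMap, map_pow,
    ← MulChar.pow_apply' _ hn.pos.ne', (quadraticChar_isQuadratic K).pow_odd hn]

theorem sum_quadraticChar_sq : ∑ s : K, quadraticChar K s ^ 2 = Fintype.card K - 1 := by
  rw [← sum_erase_add _ _ (mem_univ 0), MulChar.map_zero,
    sum_congr rfl fun s hs => quadraticChar_sq_one (ne_of_mem_erase hs)]
  simp [Nat.cast_sub (Fintype.card_pos (α := K))]

theorem natCast_card_filter_mul_sq_eq (hF : ringChar F ≠ 2) {a : F} (ha : a ≠ 0) (z : F) :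
    (#{y : F | a * y ^ 2 = z} : ℤ) = quadraticChar F a * quadraticChar F z + 1 := by
  have h := quadraticChar_card_sqrts hF (a⁻¹ * z)
  rw [map_mul, ← MulChar.inv_apply', (quadraticChar_isQuadratic F).inv,
    Set.toFinset_ofPred] at h
  rw [← h]
  congr 3; ext y
  rw [eq_inv_mul_iff_mul_eq₀ ha, eq_comm]

end QuadraticChar

section TraceFiberCharSum

variable {K F : Type*} [Field K] [DecidableEq K] [Field F] [Fintype F] [DecidableEq F] [Algebra K F]

variable (K F) in
noncomputable def traceFiberCharSum (s : K) : ℤ :=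
  ∑ z ∈ {z : F | Algebra.trace K F z = s}, quadraticChar F z

theorem quadraticChar_mul_traceFiberCharSum (hF : ringChar F ≠ 2) (z : F) :
    quadraticChar F z * traceFiberCharSum K F (Algebra.trace K F z) =
      ∑ u ∈ {u : F | Algebra.trace K F (u * z) = Algebra.trace K F z}, quadraticChar F u := by
  rcases eq_or_ne z 0 with rfl | hz
  · simp only [MulChar.map_zero, zero_mul, mul_zero, filter_true]
    exact (quadraticChar_sum_zero hF).symm
  rw [traceFiberCharSum, mul_sum]
  refine sum_equiv (Equiv.mulRight₀ z hz).symm (fun w => by simp [hz]) fun w _ => ?_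
  rw [Equiv.mulRight₀_symm_apply, map_mul, ← MulChar.inv_apply',
    (quadraticChar_isQuadratic F).inv, mul_comm]

variable [Fintype K]

theorem traceFiberCharSum_mul (hK : ringChar K ≠ 2) (hn : Odd (Module.finrank K F))
    {t : K} (ht : t ≠ 0) (s : K) :
    traceFiberCharSum K F (t * s) = quadraticChar K t * traceFiberCharSum K F s := by
  have hι : algebraMap K F t ≠ 0 := (map_ne_zero _).mpr ht
  rw [traceFiberCharSum, traceFiberCharSum, mul_sum]
  refine (sum_equiv (Equiv.mulLeft₀ _ hι) (fun w => ?_) fun w _ => ?_).symm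
  · simp [← Algebra.smul_def, ht]
  · simp only [Equiv.mulLeft₀_apply, map_mul, quadraticChar_algebraMap_of_odd_finrank hK hn]

theorem traceFiberCharSum_eq (hK : ringChar K ≠ 2) (hn : Odd (Module.finrank K F)) (s : K) :
    traceFiberCharSum K F s = quadraticChar K s * traceFiberCharSum K F 1 := by
  rcases eq_or_ne s 0 with rfl | hs
  · obtain ⟨t, ht⟩ := quadraticChar_exists_neg_one hK
    have ht0 : t ≠ 0 := by rintro rfl; simp at ht
    have h := traceFiberCharSum_mul (F := F) hK hn ht0 0
    rw [mul_zero, ht, neg_one_mul] at h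
    rw [MulChar.map_zero, zero_mul]
    omega
  · simpa using traceFiberCharSum_mul (F := F) hK hn hs 1

theorem card_filter_trace_mul_eq_trace (u : F) :
    #{z : F | Algebra.trace K F (u * z) = Algebra.trace K F z} =
      if u = 1 then Fintype.card F else Fintype.card K ^ (Module.finrank K F - 1) := by
  split_ifs with hu
  · simp [hu]
  · rw [← card_filter_trace_mul_eq (sub_ne_zero.mpr hu) 0]
    congr 1; ext z
    simp [sub_mul, sub_eq_zero]

theorem sum_traceFiberCharSum_sq (hF : ringChar F ≠ 2) :
    ∑ s : K, traceFiberCharSum K F s ^ 2 =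
      Fintype.card F - Fintype.card K ^ (Module.finrank K F - 1) := by
  calc ∑ s : K, traceFiberCharSum K F s ^ 2
      = ∑ z : F, quadraticChar F z * traceFiberCharSum K F (Algebra.trace K F z) := by
        rw [← sum_fiberwise univ (Algebra.trace K F)]
        refine sum_congr rfl fun s _ => ?_
        rw [sq, traceFiberCharSum, sum_mul]
        exact sum_congr rfl fun z hz => by rw [(mem_filter.mp hz).2, traceFiberCharSum]
    _ = ∑ u : F, quadraticChar F u *
          (#{z : F | Algebra.trace K F (u * z) = Algebra.trace K F z} : ℤ) := by
        simp_rw [quadraticChar_mul_traceFiberCharSum hF, natCast_card_filter, mul_sum, mul_ite,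
          mul_one, mul_zero, sum_filter]
        exact sum_comm
    _ = ∑ u : F, (Fintype.card K ^ (Module.finrank K F - 1) * quadraticChar F u +
          if u = 1 then (Fintype.card F : ℤ) - Fintype.card K ^ (Module.finrank K F - 1)
          else 0) := by
        refine sum_congr rfl fun u _ => ?_
        rw [card_filter_trace_mul_eq_trace]
        split_ifs with hu
        · simp [hu]
        · push_cast; ring
    _ = _ := by
        rw [sum_add_distrib, ← mul_sum, quadraticChar_sum_zero hF, sum_ite_eq',
          if_pos (mem_univ _)]
        ring

theorem traceFiberCharSum_one_sq (hK : ringChar K ≠ 2) (hn : Odd (Module.finrank K F)) :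
    traceFiberCharSum K F 1 ^ 2 = Fintype.card K ^ (Module.finrank K F - 1) := by
  have hsum := sum_traceFiberCharSum_sq (K := K) (Algebra.ringChar_eq K F ▸ hK)
  rw [sum_congr rfl fun s _ => by rw [traceFiberCharSum_eq hK hn s, mul_pow], ← sum_mul,
    sum_quadraticChar_sq, Module.card_eq_pow_finrank (K := K) (V := F)] at hsum
  have hr : (1 : ℤ) < Fintype.card K := mod_cast Fintype.one_lt_card
  refine mul_left_cancel₀ (sub_ne_zero.mpr hr.ne') (hsum.trans ?_)
  rw [← Nat.sub_one_add_one hn.pos.ne']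
  push_cast
  ring

theorem abs_traceFiberCharSum_one (hK : ringChar K ≠ 2) (hn : Odd (Module.finrank K F)) :
    |traceFiberCharSum K F 1| = Fintype.card K ^ ((Module.finrank K F - 1) / 2) := by
  rw [← abs_of_nonneg (by positivity : (0 : ℤ) ≤ Fintype.card K ^ ((Module.finrank K F - 1) / 2)),
    ← sq_eq_sq_iff_abs_eq_abs, traceFiberCharSum_one_sq hK hn, ← pow_mul]
  congr 2
  have := Nat.odd_iff.mp hn
  omega

theorem abs_traceFiberCharSum_le (hK : ringChar K ≠ 2) (hn : Odd (Module.finrank K F)) (s : K) :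
    |traceFiberCharSum K F s| ≤ Fintype.card K ^ ((Module.finrank K F - 1) / 2) := by
  rw [traceFiberCharSum_eq hK hn, abs_mul, abs_traceFiberCharSum_one hK hn]
  refine mul_le_of_le_one_left (by positivity) ?_
  rcases quadraticChar_isQuadratic K s with h | h | h <;> simp [h]

theorem natCast_card_filter_trace_mul_sq_eq (hF : ringChar F ≠ 2) {a : F} (ha : a ≠ 0) (s : K) :
    (#{y : F | Algebra.trace K F (a * y ^ 2) = s} : ℤ) =
      Fintype.card K ^ (Module.finrank K F - 1) + quadraticChar F a * traceFiberCharSum K F s := by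
  calc (#{y : F | Algebra.trace K F (a * y ^ 2) = s} : ℤ)
      = ∑ z ∈ {z : F | Algebra.trace K F z = s}, (#{y : F | a * y ^ 2 = z} : ℤ) := by
        rw [card_eq_sum_card_fiberwise (f := (a * · ^ 2)) (t := {z : F | Algebra.trace K F z = s})
          fun y hy => by simpa using hy]
        push_cast
        refine sum_congr rfl fun z hz => ?_
        rw [filter_filter]
        refine congrArg _ (congrArg _ (filter_congr fun y _ => ⟨And.right, fun h => ⟨?_, h⟩⟩))
        rw [h]; exact (mem_filter.mp hz).2
    _ = ∑ z ∈ {z : F | Algebra.trace K F z = s}, (quadraticChar F a * quadraticChar F z + 1) :=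
        sum_congr rfl fun z _ => natCast_card_filter_mul_sq_eq hF ha z
    _ = _ := by
        rw [sum_add_distrib, ← mul_sum, sum_const, card_filter_trace_eq, traceFiberCharSum]
        ring

end TraceFiberCharSum

section QuadraticTraceForm

variable {K F : Type*} [Field K] [Fintype K] [DecidableEq K] [Field F] [Fintype F] [DecidableEq F]
  [Algebra K F]

theorem natCast_card_filter_trace_quadratic_eq_zero (hF : ringChar F ≠ 2) {a : F} (ha : a ≠ 0)
    (b : F) :
    (#{x : F | Algebra.trace K F (a * x ^ 2 + b * x) = 0} : ℤ) =
      Fintype.card K ^ (Module.finrank K F - 1) +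
        quadraticChar F a * traceFiberCharSum K F (Algebra.trace K F (a * (b / (2 * a)) ^ 2)) := by
  have h2 : (2 : F) ≠ 0 := Ring.two_ne_zero hF
  have hsq (x : F) : a * (x + b / (2 * a)) ^ 2 = a * x ^ 2 + b * x + a * (b / (2 * a)) ^ 2 := by
    field_simp; ring
  rw [← natCast_card_filter_trace_mul_sq_eq hF ha]
  congr 1
  exact card_equiv (Equiv.addRight (b / (2 * a))) fun x => by simp [hsq]

theorem card_filter_trace_quadratic_eq_zero_le (hK : ringChar K ≠ 2)
    (hn : Odd (Module.finrank K F)) {a b : F} (hab : a ≠ 0 ∨ b ≠ 0) :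
    #{x : F | Algebra.trace K F (a * x ^ 2 + b * x) = 0} ≤
      Fintype.card K ^ (Module.finrank K F - 1) +
        Fintype.card K ^ ((Module.finrank K F - 1) / 2) := by
  have hF : ringChar F ≠ 2 := Algebra.ringChar_eq K F ▸ hK
  rcases eq_or_ne a 0 with rfl | ha
  · simp only [zero_mul, zero_add, card_filter_trace_mul_eq (hab.resolve_left (not_not.mpr rfl))]
    exact Nat.le_add_right _ _
  · have hη : |(quadraticChar F a : ℤ)| = 1 := by
      rcases quadraticChar_dichotomy ha with h | h <;> simp [h]
    zify
    rw [natCast_card_filter_trace_quadratic_eq_zero hF ha]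
    grw [le_abs_self (_ * _), abs_mul, hη, one_mul, abs_traceFiberCharSum_le hK hn]

theorem exists_card_filter_trace_quadratic_eq_zero_eq (hK : ringChar K ≠ 2)
    (hn : Odd (Module.finrank K F)) :
    ∃ a b : F, #{x : F | Algebra.trace K F (a * x ^ 2 + b * x) = 0} =
      Fintype.card K ^ (Module.finrank K F - 1) +
        Fintype.card K ^ ((Module.finrank K F - 1) / 2) := by
  have hF : ringChar F ≠ 2 := Algebra.ringChar_eq K F ▸ hK
  obtain ⟨a, ha, hTa⟩ : ∃ a : F, a ≠ 0 ∧ quadraticChar F a * traceFiberCharSum K F 1 =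
      Fintype.card K ^ ((Module.finrank K F - 1) / 2) := by
    rcases (abs_eq (by positivity)).mp (abs_traceFiberCharSum_one (F := F) hK hn) with h | h
    · exact ⟨1, one_ne_zero, by rw [MulChar.map_one, one_mul, h]⟩
    · obtain ⟨a, ha⟩ := quadraticChar_exists_neg_one hF
      exact ⟨a, by rintro rfl; simp at ha, by rw [ha, h, neg_one_mul, neg_neg]⟩
  obtain ⟨y, hy⟩ : ∃ y : F, Algebra.trace K F (a * y ^ 2) = 1 := by
    have hcard := natCast_card_filter_trace_mul_sq_eq (K := K) hF ha 1
    rw [hTa] at hcard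
    have hpos : (0 : ℤ) < #{y : F | Algebra.trace K F (a * y ^ 2) = 1} := by
      rw [hcard]; positivity
    obtain ⟨y, hy⟩ := card_pos.mp (Nat.cast_pos.mp hpos)
    exact ⟨y, (mem_filter.mp hy).2⟩
  refine ⟨a, 2 * a * y, ?_⟩
  have := natCast_card_filter_trace_quadratic_eq_zero (K := K) hF ha (2 * a * y)
  rw [mul_div_cancel_left₀ y (mul_ne_zero (Ring.two_ne_zero hF) ha), hy, hTa] at this
  exact_mod_cast this

theorem isLeast_natCard_support_trace_quadratic (hK : ringChar K ≠ 2)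
    (hn : Odd (Module.finrank K F)) :
    IsLeast {w : ℕ | ∃ a b : F,
        (fun x : {x : F // x ≠ 0} => Algebra.trace K F (a * x.val ^ 2 + b * x.val)) ≠ 0 ∧
          w = Nat.card {x : {x : F // x ≠ 0} // Algebra.trace K F (a * x.val ^ 2 + b * x.val) ≠ 0}}
      (Fintype.card F -
        (Fintype.card K ^ (Module.finrank K F - 1) +
          Fintype.card K ^ ((Module.finrank K F - 1) / 2))) := by
  have hweight (a b : F) := natCard_punctured_support_eq
    (fun x => Algebra.trace K F (a * x ^ 2 + b * x)) (by simp)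
  have hlt : Fintype.card K ^ (Module.finrank K F - 1) +
      Fintype.card K ^ ((Module.finrank K F - 1) / 2) < Fintype.card F := by
    rw [Module.card_eq_pow_finrank (K := K) (V := F)]
    have := FiniteField.odd_card_of_char_ne_two hK
    have : 1 < Fintype.card K := Fintype.one_lt_card
    exact Nat.pow_sub_one_add_pow_lt_pow (by omega) hn.pos.ne' (by omega)
  refine ⟨?_, ?_⟩
  · obtain ⟨a, b, hab⟩ := exists_card_filter_trace_quadratic_eq_zero_eq (F := F) hK hn
    have hpos : 0 < Nat.card {x : {x : F // x ≠ 0} //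
        Algebra.trace K F (a * x.val ^ 2 + b * x.val) ≠ 0} := by
      rw [hweight, hab]; omega
    obtain ⟨x, hx⟩ := (Nat.card_pos_iff.mp hpos).1
    exact ⟨a, b, fun h0 => hx (congrFun h0 x), by rw [hweight, hab]⟩
  · rintro _ ⟨a, b, hne, rfl⟩
    have hab : a ≠ 0 ∨ b ≠ 0 := by
      contrapose! hne
      obtain ⟨rfl, rfl⟩ := hne
      funext x
      simp
    rw [hweight]
    have := card_filter_trace_quadratic_eq_zero_le hK hn hab
    omega

end QuadraticTraceForm

/-- for `p` odd and `m` odd, the minimum distance of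
`C = {(Tr(ax² + bx))_{x ∈ F_q^*} : a, b ∈ F_q}` is `(p-1)p^{m-1} - p^{(m-1)/2}`. -/
theorem stmt_9 (p m : ℕ) (hp : p.Prime) (hodd : p ≠ 2) (hm : Odd m)
    (F : Type*) [Field F] [Fintype F] [Algebra (ZMod p) F]
    (hcard : Fintype.card F = p ^ m)
    (C : Submodule (ZMod p) ({x : F // x ≠ 0} → ZMod p))
    (hC : (C : Set ({x : F // x ≠ 0} → ZMod p)) =
      {w | ∃ a b : F, w = fun x => Algebra.trace (ZMod p) F (a * x.val ^ 2 + b * x.val)}) :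
    sInf {w : ℕ | ∃ c ∈ C, c ≠ 0 ∧ w = Nat.card {x : {x : F // x ≠ 0} // c x ≠ 0}}
      = (p - 1) * p ^ (m - 1) - p ^ ((m - 1) / 2) := by
  classical
  have : Fact p.Prime := ⟨hp⟩
  have hK : ringChar (ZMod p) ≠ 2 := by rwa [ZMod.ringChar_zmod_n]
  have hn : Module.finrank (ZMod p) F = m :=
    Nat.pow_right_injective hp.two_le <| show p ^ _ = p ^ m by
      rw [← hcard, Module.card_eq_pow_finrank (K := ZMod p) (V := F), ZMod.card]
  have hmin := isLeast_natCard_support_trace_quadratic (F := F) hK (hn ▸ hm)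
  rw [ZMod.card, hn, hcard] at hmin
  have hval : (p - 1) * p ^ (m - 1) - p ^ ((m - 1) / 2) =
      p ^ m - (p ^ (m - 1) + p ^ ((m - 1) / 2)) := by
    rw [Nat.sub_one_mul, ← pow_succ', Nat.sub_one_add_one hm.pos.ne', Nat.sub_add_eq]
  rw [hval, ← hmin.csInf_eq]
  congr 1
  ext w
  constructor
  · rintro ⟨c, hc, hne, rfl⟩
    rw [← SetLike.mem_coe, hC] at hc
    obtain ⟨a, b, rfl⟩ := hc
    exact ⟨a, b, hne, rfl⟩
  · rintro ⟨a, b, hne, rfl⟩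
    exact ⟨_, by rw [← SetLike.mem_coe, hC]; exact ⟨a, b, rfl⟩, hne, rfl⟩
end

section
/- Let p be an odd prime and q = p^m. For every polynomial f ∈ F_q[x] of degree 2, the number of pairs (α, y) ∈ F_q × F_q with y^p - y = f(α) is at most q + p^{(m+1)/2} if m is odd, and at most q + (p-1)p^{m/2} if m is even. -/
/-!
Let `ψ = η ∘ Tr` with `η` a nontrivial additive character of `𝔽_p`. Since `ψ` kills every
`z ^ p - z`, orthogonality shows that `y ^ p - y = c` has `∑_{j ∈ 𝔽_p} ψ (j c)` solutions, so the
number of pairs is `q + ∑_{j ≠ 0} ∑_α ψ (j f(α))`. Completing the square turns each inner sum into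
`χ (j a) G ψ (j e)`, where `χ` is the quadratic character of `𝔽_q` and `G` its Gauss sum, of
absolute value `√q`; this gives the bound `(p - 1) √q`. When `m` is odd, `χ` restricts to the
quadratic character of `𝔽_p`, so the sum over `j` is itself a Gauss sum over `𝔽_p`, of absolute
value at most `√p`.
-/

open scoped Finset

section TraceChar

variable {K L R : Type*} [Field K] [Field L] [Algebra K L] [CommRing R]

noncomputable def traceChar (η : AddChar K R) : AddChar L R :=
  η.compAddMonoidHom (Algebra.trace K L).toAddMonoidHom

theorem traceChar_apply (η : AddChar K R) (x : L) : traceChar η x = η (Algebra.trace K L x) := rfl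

theorem traceChar_algebraMap_mul (η : AddChar K R) (j : K) (x : L) :
    traceChar η (algebraMap K L j * x) = η (j * Algebra.trace K L x) := by
  rw [traceChar_apply, ← Algebra.smul_def, map_smul, smul_eq_mul]

variable [Fintype K] [Fintype L]

theorem Algebra.trace_pow_card (x : L) :
    Algebra.trace K L (x ^ Fintype.card K) = Algebra.trace K L x :=
  Algebra.trace_eq_of_algEquiv (FiniteField.frobeniusAlgEquivOfAlgebraic K L) x

theorem traceChar_pow_card_sub_self (η : AddChar K R) (x : L) :
    traceChar η (x ^ Fintype.card K - x) = 1 := by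
  rw [traceChar_apply, map_sub, Algebra.trace_pow_card, sub_self, AddChar.map_zero_eq_one]

theorem isPrimitive_traceChar {η : AddChar K R} (hη : η.IsPrimitive) :
    (traceChar η : AddChar L R).IsPrimitive := by
  refine AddChar.IsPrimitive.of_ne_one fun h => hη one_ne_zero (AddChar.ext _ _ fun s => ?_)
  obtain ⟨x, rfl⟩ := Algebra.trace_surjective K L s
  simpa [traceChar_apply] using DFunLike.congr_fun h x

end TraceChar

section ArtinSchreier

variable {p : ℕ} [Fact p.Prime] {F : Type*} [Field F] [CharP F p] [Algebra (ZMod p) F]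

theorem pow_char_eq_self_iff {x : F} : x ^ p = x ↔ x ∈ Set.range (algebraMap (ZMod p) F) := by
  rw [← Subfield.mem_bot_iff_pow_eq_self F p, ← ZMod.fieldRange_castHom_eq_bot p,
    RingHom.mem_fieldRange, Subsingleton.elim (ZMod.castHom dvd_rfl F) (algebraMap (ZMod p) F)]
  rfl

variable [Fintype F] [DecidableEq F]

theorem sum_ite_pow_char_eq_self {M : Type*} [AddCommMonoid M] (g : F → M) :
    ∑ x, (if x ^ p = x then g x else 0) = ∑ j : ZMod p, g (algebraMap (ZMod p) F j) := by
  rw [← Finset.sum_filter, ← Finset.sum_image fun _ _ _ _ h => (algebraMap (ZMod p) F).injective h]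
  congr
  ext x
  simp [pow_char_eq_self_iff]

variable {η : AddChar (ZMod p) ℂ}

theorem sum_traceChar_mul_pow_char_sub (hη : η.IsPrimitive) (x : F) :
    ∑ y : F, traceChar η (x * (y ^ p - y)) = if x ^ p = x then (Fintype.card F : ℂ) else 0 := by
  obtain ⟨c, rfl⟩ := surjective_frobenius F p x
  have hsplit : ∀ y : F, traceChar η (c ^ p * (y ^ p - y)) = traceChar η (y * (c - c ^ p)) := by
    intro y
    rw [show c ^ p * (y ^ p - y) = ((c * y) ^ Fintype.card (ZMod p) - c * y) + y * (c - c ^ p) by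
      rw [ZMod.card, mul_pow]; ring, AddChar.map_add_eq_mul, traceChar_pow_card_sub_self, one_mul]
  have hfixed : (c ^ p) ^ p = c ^ p ↔ c - c ^ p = 0 := by
    rw [sub_eq_zero, eq_comm]
    exact (frobenius_inj F p).eq_iff
  rw [frobenius_def, Finset.sum_congr rfl fun y _ => hsplit y,
    AddChar.sum_mulShift _ (isPrimitive_traceChar hη)]
  simp only [hfixed, Nat.cast_ite, Nat.cast_zero]

theorem card_pow_char_sub_eq (hη : η.IsPrimitive) (c : F) :
    (#{y | y ^ p - y = c} : ℂ) = ∑ j : ZMod p, traceChar η (algebraMap (ZMod p) F j * c) := by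
  have hψ : (traceChar η : AddChar F ℂ).IsPrimitive := isPrimitive_traceChar hη
  apply mul_left_cancel₀ (Nat.cast_ne_zero.mpr Fintype.card_ne_zero : (Fintype.card F : ℂ) ≠ 0)
  calc (Fintype.card F : ℂ) * #{y | y ^ p - y = c}
      = ∑ y, ∑ x, traceChar η (x * (y ^ p - y - c)) := by
        rw [Finset.card_filter, Nat.cast_sum, Finset.mul_sum]
        refine Finset.sum_congr rfl fun y _ => ?_
        simp_rw [AddChar.sum_mulShift _ hψ, sub_eq_zero]
        split_ifs <;> simp
    _ = ∑ x, traceChar η (-(x * c)) * ∑ y, traceChar η (x * (y ^ p - y)) := by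
        rw [Finset.sum_comm]
        refine Finset.sum_congr rfl fun x _ => ?_
        rw [Finset.mul_sum]
        refine Finset.sum_congr rfl fun y _ => ?_
        rw [← AddChar.map_add_eq_mul]
        ring_nf
    _ = ∑ x, if x ^ p = x then (Fintype.card F : ℂ) * traceChar η (-(x * c)) else 0 := by
        simp_rw [sum_traceChar_mul_pow_char_sub hη]
        refine Finset.sum_congr rfl fun x _ => ?_
        split_ifs <;> ring
    _ = (Fintype.card F : ℂ) * ∑ j : ZMod p, traceChar η (algebraMap (ZMod p) F j * c) := by
        rw [sum_ite_pow_char_eq_self, Finset.mul_sum]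
        exact Fintype.sum_equiv (Equiv.neg _) _ _ fun j => by simp

theorem natCard_pow_char_sub_eq_sum (hη : η.IsPrimitive) (g : F → F) :
    (Nat.card {ay : F × F // ay.2 ^ p - ay.2 = g ay.1} : ℂ) =
      ∑ j : ZMod p, ∑ x, traceChar η (algebraMap (ZMod p) F j * g x) := by
  rw [Nat.card_eq_fintype_card, Fintype.card_subtype, Finset.card_filter, Fintype.sum_prod_type]
  simp_rw [← Finset.card_filter]
  push_cast
  simp_rw [card_pow_char_sub_eq hη]
  exact Finset.sum_comm

end ArtinSchreier

section QuadraticChar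

theorem Nat.pow_succ_div_two_of_odd {q : ℕ} (hq : Odd q) (n : ℕ) :
    q ^ (n + 1) / 2 = q * (q ^ n / 2) + q / 2 := by
  obtain ⟨c, hc⟩ := hq.pow (n := n)
  obtain ⟨r, hr⟩ := hq
  have hdiv : q ^ n / 2 = c := by omega
  rw [hdiv, pow_succ, hc, show (2 * c + 1) * q = 2 * (q * c) + q by ring]
  omega

theorem FiniteField.pow_card_pow_div_two {K : Type*} [Field K] [Fintype K] (hK : ringChar K ≠ 2)
    (a : K) (n : ℕ) : a ^ (Fintype.card K ^ n / 2) = (a ^ (Fintype.card K / 2)) ^ n := by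
  induction n with
  | zero => simp
  | succ n ih =>
    have hodd : Odd (Fintype.card K) := Nat.odd_iff.mpr (FiniteField.odd_card_of_char_ne_two hK)
    rw [Nat.pow_succ_div_two_of_odd hodd, pow_add, pow_mul, FiniteField.pow_card, ih, pow_succ]

theorem quadraticChar_algebraMap {K L : Type*} [Field K] [Fintype K] [DecidableEq K] [Field L]
    [Fintype L] [DecidableEq L] [Algebra K L] (hL : ringChar L ≠ 2)
    (hn : Odd (Module.finrank K L)) (a : K) :
    quadraticChar L (algebraMap K L a) = quadraticChar K a := by
  have hK : ringChar K ≠ 2 := by rwa [Algebra.ringChar_eq K L]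
  refine (quadraticChar_isQuadratic L).eq_of_eq_coe (quadraticChar_isQuadratic K) hL ?_
  rw [quadraticChar_eq_pow_of_char_ne_two' hL, Module.card_eq_pow_finrank (K := K), ← map_pow,
    FiniteField.pow_card_pow_div_two hK, ← quadraticChar_eq_pow_of_char_ne_two' hK,
    ← map_intCast (algebraMap K L)]
  rcases quadraticChar_isQuadratic K a with h | h | h <;> simp [h, hn.neg_one_pow, hn.pos.ne']

theorem MulChar.IsQuadratic.norm_le_one {R : Type*} [CommMonoid R] {χ : MulChar R ℂ}
    (hχ : χ.IsQuadratic) (a : R) : ‖χ a‖ ≤ 1 := by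
  rcases hχ a with h | h | h <;> simp [h]

variable {F : Type*} [Field F] [Fintype F]

theorem norm_gaussSum_le {χ : MulChar F ℂ} (hχ : χ ≠ 1) (hχq : χ.IsQuadratic) (ψ : AddChar F ℂ) :
    ‖gaussSum χ ψ‖ ≤ √(Fintype.card F) := by
  rcases eq_or_ne ψ 1 with rfl | hψ
  · rw [gaussSum_one_right hχ, norm_zero]
    positivity
  · rw [Real.le_sqrt (norm_nonneg _) (Nat.cast_nonneg _), ← norm_pow,
      gaussSum_sq hχ hχq (AddChar.IsPrimitive.of_ne_one hψ), norm_mul, Complex.norm_natCast]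
    exact mul_le_of_le_one_left (Nat.cast_nonneg _) (hχq.norm_le_one _)

variable [DecidableEq F]

variable (F) in
noncomputable def complexQuadraticChar : MulChar F ℂ :=
  (quadraticChar F).ringHomComp (Int.castRingHom ℂ)

theorem complexQuadraticChar_apply (a : F) :
    complexQuadraticChar F a = quadraticChar F a := rfl

theorem isQuadratic_complexQuadraticChar : (complexQuadraticChar F).IsQuadratic :=
  (quadraticChar_isQuadratic F).comp _

theorem complexQuadraticChar_ne_one (hF : ringChar F ≠ 2) : complexQuadraticChar F ≠ 1 :=
  (MulChar.ringHomComp_ne_one_iff (RingHom.injective_int _)).mpr (quadraticChar_ne_one hF)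

theorem complexQuadraticChar_algebraMap {K : Type*} [Field K] [Fintype K] [DecidableEq K]
    [Algebra K F] (hF : ringChar F ≠ 2) (hn : Odd (Module.finrank K F)) (a : K) :
    complexQuadraticChar F (algebraMap K F a) = complexQuadraticChar K a := by
  rw [complexQuadraticChar_apply, complexQuadraticChar_apply, quadraticChar_algebraMap hF hn]

theorem norm_gaussSum_complexQuadraticChar_le (hF : ringChar F ≠ 2) (ψ : AddChar F ℂ) :
    ‖gaussSum (complexQuadraticChar F) ψ‖ ≤ √(Fintype.card F) :=
  norm_gaussSum_le (complexQuadraticChar_ne_one hF) isQuadratic_complexQuadraticChar ψ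

theorem norm_complexQuadraticChar_mul_gaussSum_le (hF : ringChar F ≠ 2) (a : F)
    (ψ : AddChar F ℂ) :
    ‖complexQuadraticChar F a * gaussSum (complexQuadraticChar F) ψ‖ ≤ √(Fintype.card F) := by
  rw [norm_mul]
  exact (mul_le_of_le_one_left (norm_nonneg _)
    (isQuadratic_complexQuadraticChar.norm_le_one a)).trans
      (norm_gaussSum_complexQuadraticChar_le hF ψ)

theorem sum_addChar_mul_sq (hF : ringChar F ≠ 2) {ψ : AddChar F ℂ} (hψ : ψ.IsPrimitive) {w : F}
    (hw : w ≠ 0) :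
    ∑ x, ψ (w * x ^ 2) = complexQuadraticChar F w * gaussSum (complexQuadraticChar F) ψ := by
  set χ := complexQuadraticChar F
  have hsqrts : ∀ t : F, (#{x | x ^ 2 = t} : ℂ) = χ t + 1 := fun t => by
    rw [complexQuadraticChar_apply]
    norm_cast
    rw [← quadraticChar_card_sqrts hF t, Set.toFinset_ofPred]
  calc ∑ x, ψ (w * x ^ 2)
      = ∑ t, (#{x | x ^ 2 = t} : ℂ) * ψ (w * t) := by
        rw [← Finset.sum_fiberwise Finset.univ (· ^ 2)]
        refine Finset.sum_congr rfl fun t _ => ?_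
        rw [Finset.sum_congr rfl fun x hx => by rw [(Finset.mem_filter.mp hx).2], Finset.sum_const,
          nsmul_eq_mul]
    _ = gaussSum χ (ψ.mulShift w) + ∑ t, ψ (t * w) := by
        simp_rw [hsqrts, add_mul, one_mul, Finset.sum_add_distrib, mul_comm _ w]
        rfl
    _ = χ w * gaussSum χ ψ := by
        rw [AddChar.sum_mulShift _ hψ, if_neg hw, Nat.cast_zero, add_zero,
          ← Units.val_mk0 hw, gaussSum_mulShift_eq, isQuadratic_complexQuadraticChar.inv]

end QuadraticChar

open Polynomial in
theorem Polynomial.exists_eval_eq_mul_add_sq_add {K : Type*} [Field K] (h2 : (2 : K) ≠ 0)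
    {f : K[X]} (hf : f.natDegree = 2) :
    ∃ a d e : K, a ≠ 0 ∧ ∀ x, f.eval x = a * (x + d) ^ 2 + e := by
  have ha : f.coeff 2 ≠ 0 := by
    rw [← hf]
    exact leadingCoeff_ne_zero.mpr (ne_zero_of_natDegree_gt (n := 0) (by omega))
  refine ⟨f.coeff 2, f.coeff 1 / (2 * f.coeff 2),
    f.coeff 0 - f.coeff 2 * (f.coeff 1 / (2 * f.coeff 2)) ^ 2, ha, fun x => ?_⟩
  rw [eval_eq_sum_range, hf, Finset.sum_range_succ, Finset.sum_range_succ, Finset.sum_range_one]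
  field_simp
  ring

section QuadraticEquation

variable {F : Type*} [Field F] [Fintype F] [DecidableEq F]

theorem sum_addChar_mul_sq_add (hF : ringChar F ≠ 2) {ψ : AddChar F ℂ} (hψ : ψ.IsPrimitive)
    {u a : F} (hua : u * a ≠ 0) (d e : F) :
    ∑ x, ψ (u * (a * (x + d) ^ 2 + e)) =
      complexQuadraticChar F (u * a) * gaussSum (complexQuadraticChar F) ψ * ψ (u * e) := by
  rw [Fintype.sum_equiv (Equiv.addRight d) (fun x => ψ (u * (a * (x + d) ^ 2 + e)))
    (fun y => ψ (u * (a * y ^ 2 + e))) fun _ => rfl, ← sum_addChar_mul_sq hF hψ hua, Finset.sum_mul]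
  refine Finset.sum_congr rfl fun x _ => ?_
  rw [← AddChar.map_add_eq_mul]
  ring_nf

variable {p : ℕ} [Fact p.Prime] [CharP F p] [Algebra (ZMod p) F] {η : AddChar (ZMod p) ℂ}

theorem natCard_pow_char_sub_eq_card_add_sum (hF : ringChar F ≠ 2) (hη : η.IsPrimitive)
    {g : F → F} {a d e : F} (ha : a ≠ 0) (hg : ∀ x, g x = a * (x + d) ^ 2 + e) :
    (Nat.card {ay : F × F // ay.2 ^ p - ay.2 = g ay.1} : ℂ) = Fintype.card F +
      ∑ j ∈ Finset.univ.erase 0, complexQuadraticChar F (algebraMap (ZMod p) F j * a) *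
        gaussSum (complexQuadraticChar F) (traceChar η) * η (j * Algebra.trace (ZMod p) F e) := by
  rw [natCard_pow_char_sub_eq_sum hη, ← Finset.add_sum_erase _ _ (Finset.mem_univ 0)]
  congr 1
  · simp
  · refine Finset.sum_congr rfl fun j hj => ?_
    have hj : algebraMap (ZMod p) F j ≠ 0 :=
      (map_ne_zero _).mpr (Finset.ne_of_mem_erase hj)
    simp_rw [hg]
    rw [sum_addChar_mul_sq_add hF (isPrimitive_traceChar hη) (mul_ne_zero hj ha),
      traceChar_algebraMap_mul]

theorem norm_natCard_pow_char_sub_sub_card_le (hF : ringChar F ≠ 2) (hη : η.IsPrimitive)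
    {g : F → F} {a d e : F} (ha : a ≠ 0) (hg : ∀ x, g x = a * (x + d) ^ 2 + e) :
    ‖(Nat.card {ay : F × F // ay.2 ^ p - ay.2 = g ay.1} : ℂ) - Fintype.card F‖ ≤
      (p - 1) * √(Fintype.card F) := by
  rw [natCard_pow_char_sub_eq_card_add_sum hF hη ha hg, add_sub_cancel_left]
  calc _ ≤ ∑ _j ∈ Finset.univ.erase (0 : ZMod p), √(Fintype.card F) :=
        norm_sum_le_of_le _ fun j _ => by
          rw [norm_mul, AddChar.norm_apply, mul_one]
          exact norm_complexQuadraticChar_mul_gaussSum_le hF _ _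
    _ = (p - 1) * √(Fintype.card F) := by
        rw [Finset.sum_const, Finset.card_erase_of_mem (Finset.mem_univ _), Finset.card_univ,
          ZMod.card, nsmul_eq_mul, Nat.cast_pred (Fact.out : p.Prime).pos]

theorem norm_natCard_pow_char_sub_sub_card_le_of_odd (hF : ringChar F ≠ 2) (hη : η.IsPrimitive)
    (hn : Odd (Module.finrank (ZMod p) F)) {g : F → F} {a d e : F} (ha : a ≠ 0)
    (hg : ∀ x, g x = a * (x + d) ^ 2 + e) :
    ‖(Nat.card {ay : F × F // ay.2 ^ p - ay.2 = g ay.1} : ℂ) - Fintype.card F‖ ≤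
      √p * √(Fintype.card F) := by
  have hp : ringChar (ZMod p) ≠ 2 := by rwa [Algebra.ringChar_eq (ZMod p) F]
  set t := Algebra.trace (ZMod p) F e
  have hsum : ∑ j ∈ Finset.univ.erase 0, complexQuadraticChar F (algebraMap (ZMod p) F j * a) *
        gaussSum (complexQuadraticChar F) (traceChar η) * η (j * t) =
      gaussSum (complexQuadraticChar (ZMod p)) (η.mulShift t) *
        (complexQuadraticChar F a * gaussSum (complexQuadraticChar F) (traceChar η)) := by
    rw [show gaussSum (complexQuadraticChar (ZMod p)) (η.mulShift t) =
        ∑ j, complexQuadraticChar (ZMod p) j * η.mulShift t j from rfl, Finset.sum_mul,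
      ← Finset.sum_erase Finset.univ (a := 0) (by simp [complexQuadraticChar_apply])]
    refine Finset.sum_congr rfl fun j _ => ?_
    rw [map_mul, complexQuadraticChar_algebraMap hF hn, AddChar.mulShift_apply, mul_comm t]
    ring
  rw [natCard_pow_char_sub_eq_card_add_sum hF hη ha hg, add_sub_cancel_left, hsum, norm_mul]
  refine mul_le_mul ?_ (norm_complexQuadraticChar_mul_gaussSum_le hF _ _) (norm_nonneg _)
    (Real.sqrt_nonneg _)
  simpa using norm_gaussSum_complexQuadraticChar_le hp (η.mulShift t)

end QuadraticEquation

theorem Nat.le_add_of_norm_natCast_sub_le {N q B : ℕ} (h : ‖(N : ℂ) - q‖ ≤ B) : N ≤ q + B := by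
  have h' : |(N : ℝ) - q| ≤ B := by
    rwa [← Complex.ofReal_natCast, ← Complex.ofReal_natCast, ← Complex.ofReal_sub,
      Complex.norm_real, Real.norm_eq_abs] at h
  exact_mod_cast (by linarith [le_abs_self ((N : ℝ) - q)] : (N : ℝ) ≤ q + B)

theorem Real.sqrt_pow_of_even {x : ℝ} (hx : 0 ≤ x) {n : ℕ} (hn : Even n) :
    √(x ^ n) = x ^ (n / 2) := by
  obtain ⟨k, rfl⟩ := hn
  rw [← two_mul, Nat.mul_div_cancel_left k two_pos, pow_mul', Real.sqrt_sq (by positivity)]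

theorem stmt_10_general (p m : ℕ) (hp : p.Prime) (hodd : p ≠ 2)
    (F : Type*) [Field F] [Fintype F] (hcard : Fintype.card F = p ^ m)
    (f : Polynomial F) (hf : f.natDegree = 2) :
    Nat.card {ay : F × F // ay.2 ^ p - ay.2 = f.eval ay.1}
      ≤ if Odd m then p ^ m + p ^ ((m + 1) / 2) else p ^ m + (p - 1) * p ^ (m / 2) := by
  classical
  have := Fact.mk hp
  have : CharP F p := charP_of_card_eq_prime_pow hcard
  let : Algebra (ZMod p) F := ZMod.algebra F p
  have hF : ringChar F ≠ 2 := by rwa [ringChar.eq F p]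
  have hfinrank : Module.finrank (ZMod p) F = m := by
    have h := (Module.card_eq_pow_finrank (K := ZMod p) (V := F)).symm.trans hcard
    exact Nat.pow_right_injective hp.two_le (by rwa [ZMod.card] at h)
  have hq : √(Fintype.card F : ℝ) = √(p ^ m) := by rw [hcard]; push_cast; rfl
  obtain ⟨a, d, e, ha, hfe⟩ := f.exists_eval_eq_mul_add_sq_add (Ring.two_ne_zero hF) hf
  have hη := ZMod.isPrimitive_stdAddChar p
  split_ifs with hmo
  · rw [← hcard]
    refine Nat.le_add_of_norm_natCast_sub_le ?_
    refine (norm_natCard_pow_char_sub_sub_card_le_of_odd hF hη (hfinrank ▸ hmo) ha hfe).trans_eq ?_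
    rw [hq, ← Real.sqrt_mul (Nat.cast_nonneg _), ← pow_succ',
      Real.sqrt_pow_of_even (Nat.cast_nonneg _) hmo.add_one]
    push_cast
    rfl
  · rw [← hcard]
    refine Nat.le_add_of_norm_natCast_sub_le ?_
    refine (norm_natCard_pow_char_sub_sub_card_le hF hη ha hfe).trans_eq ?_
    rw [hq, Real.sqrt_pow_of_even (Nat.cast_nonneg _) (Nat.not_odd_iff_even.mp hmo)]
    push_cast [hp.one_le]
    rfl

/-- for any `f ∈ F_q[x]` of degree 2, the number of pairs
`(α, y) ∈ F_q × F_q` with `y^p - y = f(α)` is at most `q + p^{(m+1)/2}` if `m` is odd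
and at most `q + (p-1)p^{m/2}` if `m` is even. -/
theorem stmt_10 (p m : ℕ) (hp : p.Prime) (hodd : p ≠ 2) (hm : 0 < m)
    (F : Type*) [Field F] [Fintype F] (hcard : Fintype.card F = p ^ m)
    (f : Polynomial F) (hf : f.natDegree = 2) :
    Nat.card {ay : F × F // ay.2 ^ p - ay.2 = f.eval ay.1}
      ≤ if Odd m then p ^ m + p ^ ((m + 1) / 2) else p ^ m + (p - 1) * p ^ (m / 2) :=
  stmt_10_general p m hp hodd F hcard f hf
end

section
/- Let p be an odd prime, q = p^m with m odd, and f(x) = a x^2 + b x + c ∈ F_q[x] with a ≠ 0. Then |{α ∈ F_q : Tr(f(α)) = 0}| equals p^{m-1} + ε p^{(m-1)/2} for some ε ∈ {-1, 0, 1}, where Tr is the trace from F_q to F_p. -/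
/-!
Completing the square turns the count into `#{β | Tr(aβ²) = e}`, and counting square roots turns
this into `#H + ∑_{γ ∈ H} χ(γ)`, where `χ` is the quadratic character of `F` and
`H = {γ | Tr(aγ) = e}` is an affine hyperplane with `p^{m-1}` points. Detecting `H` with an
additive character `ψ` of `𝔽_p` gives `p · ∑_{γ ∈ H} χ(γ) = χ(a) χ(-e) g_F g_p` for the quadratic
Gauss sums `g_F` (with respect to `ψ ∘ Tr`) and `g_p`: here one uses that `χ` restricts to the
quadratic character of `𝔽_p`, because `[F : 𝔽_p]` is odd. As `g_F² = χ(-1) p^m` and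
`g_p² = χ(-1) p`, the character sum squares to `0` or `p^{m-1}`.
-/

open Finset Module Polynomial

theorem isSquare_algebraMap_iff_of_odd_finrank {K L : Type*} [Field K] [Field L] [Algebra K L]
    [FiniteDimensional K L] (hn : Odd (finrank K L)) {t : K} :
    IsSquare (algebraMap K L t) ↔ IsSquare t := by
  refine ⟨fun ⟨s, hs⟩ => ?_, fun h => h.map (algebraMap K L)⟩
  by_cases hsK : s ∈ (algebraMap K L).range
  · obtain ⟨r, rfl⟩ := hsK
    exact ⟨r, (algebraMap K L).injective (by simpa using hs)⟩
  · have hint : IsIntegral K s := .of_finite K s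
    have hroot : aeval s (X ^ 2 - C t) = 0 := by simp [hs, sq]
    have hle : (minpoly K s).natDegree ≤ 2 := by
      simpa using natDegree_le_of_dvd (minpoly.dvd K s hroot) (X_pow_sub_C_ne_zero two_pos t)
    have hne : (minpoly K s).natDegree ≠ 1 := mt minpoly.natDegree_eq_one_iff.mp hsK
    have hpos := minpoly.natDegree_pos hint
    have htwo : (minpoly K s).natDegree = 2 := by omega
    exact absurd (htwo ▸ minpoly.degree_dvd hint) hn.not_two_dvd_nat

theorem quadraticChar_algebraMap_of_odd_finrank_s12 {K F : Type*} [Field K] [Fintype K] [DecidableEq K]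
    [Field F] [Fintype F] [DecidableEq F] [Algebra K F] (hn : Odd (finrank K F)) (t : K) :
    quadraticChar F (algebraMap K F t) = quadraticChar K t := by
  simp only [quadraticChar_apply, quadraticCharFun, map_eq_zero,
    isSquare_algebraMap_iff_of_odd_finrank hn]

theorem AddMonoidHom.card_mul_card_fiber_of_surjective {G M : Type*} [AddGroup G] [Fintype G]
    [AddMonoid M] [Fintype M] [DecidableEq M] (f : G →+ M) (hf : Function.Surjective f) (y : M) :
    Fintype.card M * #{g | f g = y} = Fintype.card G := by
  rw [← card_univ (α := G),
    card_eq_sum_card_fiberwise (f := f) (s := univ) (t := univ) fun _ _ => mem_univ _,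
    sum_congr rfl fun x _ => AddMonoidHom.card_fiber_eq_of_mem_range f (hf x) (hf y), sum_const,
    smul_eq_mul, card_univ]

theorem card_filter_sq_mem {F : Type*} [Field F] [Fintype F] [DecidableEq F]
    (hF : ringChar F ≠ 2) (s : Finset F) :
    (#{β | β ^ 2 ∈ s} : ℤ) = #s + ∑ γ ∈ s, quadraticChar F γ := by
  rw [card_eq_sum_card_fiberwise (f := (· ^ 2)) (t := s) fun β hβ => by simpa using hβ,
    Nat.cast_sum, card_eq_sum_ones s, Nat.cast_sum, ← sum_add_distrib]
  refine sum_congr rfl fun γ hγ => ?_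
  rw [Nat.cast_one, add_comm, ← quadraticChar_card_sqrts hF γ, Set.toFinset_ofPred]
  congr 2
  ext β
  simp +contextual [hγ]

theorem card_filter_trace_mul_eq_s12 {K F : Type*} [Field K] [Fintype K] [DecidableEq K] [Field F]
    [Fintype F] [Algebra K F] {a : F} (ha : a ≠ 0) (e : K) :
    #{γ | Algebra.trace K F (a * γ) = e} = Fintype.card K ^ (finrank K F - 1) := by
  have hsurj : Function.Surjective fun γ => Algebra.trace K F (a * γ) := fun y => by
    obtain ⟨x, rfl⟩ := Algebra.trace_surjective K F y
    exact ⟨a⁻¹ * x, by simp [ha]⟩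
  have h := AddMonoidHom.card_mul_card_fiber_of_surjective
    ((Algebra.trace K F).toAddMonoidHom.comp (AddMonoidHom.mulLeft a)) hsurj e
  rw [card_eq_pow_finrank (K := K) (V := F), ← Nat.sub_one_add_one finrank_pos.ne',
    pow_succ'] at h
  exact Nat.eq_of_mul_eq_mul_left Fintype.card_pos h

theorem natCard_map_quadratic_eq_zero {F G 𝓛 : Type*} [Field F] [Fintype F] [AddGroup G]
    [DecidableEq G] [FunLike 𝓛 F G] [AddMonoidHomClass 𝓛 F G] (L : 𝓛) (h2 : (2 : F) ≠ 0)
    {a : F} (ha : a ≠ 0) (b c : F) :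
    Nat.card {α // L (a * α ^ 2 + b * α + c) = 0} =
      #{β | L (a * β ^ 2) = L (b ^ 2 / (4 * a) - c)} := by
  have h4 : (4 : F) ≠ 0 := by
    convert mul_ne_zero h2 h2 using 1
    norm_num
  have hsq (α : F) :
      a * (α + b / (2 * a)) ^ 2 = (a * α ^ 2 + b * α + c) + (b ^ 2 / (4 * a) - c) := by
    field_simp
    ring
  rw [← Fintype.card_subtype, ← Nat.card_eq_fintype_card]
  exact Nat.card_congr <| (Equiv.addRight (b / (2 * a))).subtypeEquiv fun α => by
    rw [Equiv.coe_addRight, hsq, map_add L (a * α ^ 2 + b * α + c), add_eq_right]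

theorem gaussSum_mulShift_of_isQuadratic {F R : Type*} [Field F] [Fintype F] [CommRing R]
    [IsDomain R] {χ : MulChar F R} (hχ : χ ≠ 1) (hq : χ.IsQuadratic) (ψ : AddChar F R) (a : F) :
    gaussSum χ (ψ.mulShift a) = χ a * gaussSum χ ψ := by
  rcases eq_or_ne a 0 with rfl | ha
  · simp [gaussSum, MulChar.sum_eq_zero_of_ne_one hχ, MulChar.map_zero]
  · simpa [hq.inv] using gaussSum_mulShift_eq χ ψ (Units.mk0 a ha)

local notation "χ[" F "]" => MulChar.ringHomComp (quadraticChar F) (Int.castRingHom ℂ)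

theorem quadraticChar_ringHomComp_ne_one {F : Type*} [Field F] [Fintype F] [DecidableEq F]
    (hF : ringChar F ≠ 2) : χ[F] ≠ 1 :=
  (MulChar.ringHomComp_ne_one_iff (f := Int.castRingHom ℂ) Int.cast_injective).mpr
    (quadraticChar_ne_one hF)

theorem AddChar.IsPrimitive.comp_trace {K F R : Type*} [Field K] [Fintype K] [Field F] [Fintype F]
    [Algebra K F] [CommMonoid R] {ψ : AddChar K R} (hψ : ψ.IsPrimitive) :
    (ψ.compAddMonoidHom (Algebra.trace K F).toAddMonoidHom).IsPrimitive := by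
  refine .of_ne_one fun h => ?_
  obtain ⟨u, hu⟩ := AddChar.ne_one_iff.mp (by simpa using hψ one_ne_zero)
  obtain ⟨x, rfl⟩ := Algebra.trace_surjective K F u
  exact hu (by simpa using DFunLike.congr_fun h x)

section TraceFiber

variable {K F : Type*} [Field K] [Fintype K] [DecidableEq K] [Field F] [Fintype F] [DecidableEq F]
  [Algebra K F]

theorem card_mul_sum_quadraticChar_trace_fiber (hF : ringChar F ≠ 2) (hn : Odd (finrank K F))
    {ψ : AddChar K ℂ} (hψ : ψ.IsPrimitive) (a : F) (e : K) :
    (Fintype.card K : ℂ) * ∑ γ with Algebra.trace K F (a * γ) = e, (quadraticChar F γ : ℂ) =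
      χ[F] a * χ[K] (-e) * gaussSum χ[F] (ψ.compAddMonoidHom (Algebra.trace K F).toAddMonoidHom) *
        gaussSum χ[K] ψ := by
  set Tr := Algebra.trace K F
  set Ψ := ψ.compAddMonoidHom Tr.toAddMonoidHom
  have hrestrict (t : K) : χ[F] (algebraMap K F t) = χ[K] t := by
    simp [quadraticChar_algebraMap_of_odd_finrank_s12 hn]
  have horth (γ : F) : ∑ t : K, ψ (t * (Tr (a * γ) - e)) =
      if Tr (a * γ) = e then (Fintype.card K : ℂ) else 0 := by
    simp [AddChar.sum_mulShift _ hψ, sub_eq_zero]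
  have hΨ (t : K) (γ : F) : Ψ.mulShift (algebraMap K F t * a) γ = ψ (t * Tr (a * γ)) := by
    simp [Ψ, ← Algebra.smul_def]
  calc (Fintype.card K : ℂ) * ∑ γ with Tr (a * γ) = e, (quadraticChar F γ : ℂ)
      = ∑ γ, χ[F] γ * ∑ t : K, ψ (t * (Tr (a * γ) - e)) := by
        simp_rw [horth, mul_ite, mul_zero, ← sum_filter, mul_sum, mul_comm]
        rfl
    _ = ∑ t : K, ψ (-e * t) * gaussSum χ[F] (Ψ.mulShift (algebraMap K F t * a)) := by
        simp_rw [mul_sum]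
        rw [sum_comm]
        refine sum_congr rfl fun t _ => ?_
        rw [gaussSum, mul_sum]
        refine sum_congr rfl fun γ _ => ?_
        rw [hΨ, mul_sub, sub_eq_add_neg, AddChar.map_add_eq_mul, neg_mul, mul_comm e]
        ring
    _ = χ[F] a * gaussSum χ[F] Ψ * ∑ t : K, χ[K] t * ψ.mulShift (-e) t := by
        rw [mul_sum]
        refine sum_congr rfl fun t _ => ?_
        rw [gaussSum_mulShift_of_isQuadratic (quadraticChar_ringHomComp_ne_one hF)
          ((quadraticChar_isQuadratic F).comp _), map_mul χ[F], hrestrict, AddChar.mulShift_apply]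
        ring
    _ = _ := by
        rw [← gaussSum, gaussSum_mulShift_of_isQuadratic
          (quadraticChar_ringHomComp_ne_one (Algebra.ringChar_eq K F ▸ hF))
          ((quadraticChar_isQuadratic K).comp _)]
        ring

theorem sum_quadraticChar_trace_fiber_sq (hF : ringChar F ≠ 2) (hn : Odd (finrank K F)) {a : F}
    (ha : a ≠ 0) (e : K) :
    (∑ γ with Algebra.trace K F (a * γ) = e, quadraticChar F γ) ^ 2 =
      if e = 0 then 0 else (Fintype.card K : ℤ) ^ (finrank K F - 1) := by
  have hK : ringChar K ≠ 2 := Algebra.ringChar_eq K F ▸ hF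
  obtain ⟨ψ, hψ1⟩ := AddChar.exists_apply_ne_zero.mpr (one_ne_zero (α := K))
  have hψ : ψ.IsPrimitive := .of_ne_one fun h => hψ1 (by simp [h])
  have hgF := gaussSum_sq (quadraticChar_ringHomComp_ne_one hF)
    ((quadraticChar_isQuadratic F).comp _) (hψ.comp_trace (F := F))
  have hgK := gaussSum_sq (quadraticChar_ringHomComp_ne_one hK)
    ((quadraticChar_isQuadratic K).comp _) hψ
  have key := congrArg (· ^ 2) (card_mul_sum_quadraticChar_trace_fiber hF hn hψ a e)
  have hη := quadraticChar_algebraMap_of_odd_finrank_s12 (F := F) hn (-1)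
  rw [map_neg, map_one] at hη
  simp only [mul_pow, hgF, hgK, card_eq_pow_finrank (K := K) (V := F), MulChar.ringHomComp_apply,
    Int.coe_castRingHom, hη] at key
  set S := ∑ γ with Algebra.trace K F (a * γ) = e, quadraticChar F γ
  have hS : (Fintype.card K : ℤ) ^ 2 * S ^ 2 = quadraticChar F a ^ 2 * quadraticChar K (-e) ^ 2 *
      (quadraticChar K (-1) * Fintype.card K ^ finrank K F) *
      (quadraticChar K (-1) * Fintype.card K) := by
    exact_mod_cast key
  have hq : (Fintype.card K : ℤ) ≠ 0 := Nat.cast_ne_zero.mpr Fintype.card_ne_zero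
  obtain ⟨k, hk⟩ := hn
  rw [hk, Nat.add_sub_cancel]
  split_ifs with he
  · simpa [he, hq] using hS
  · rw [quadraticChar_sq_one ha, quadraticChar_sq_one (neg_ne_zero.mpr he), hk] at hS
    refine mul_left_cancel₀ (pow_ne_zero 2 hq) ?_
    linear_combination hS + (Fintype.card K : ℤ) ^ (2 * k + 2) *
      quadraticChar_sq_one (F := K) (neg_ne_zero.mpr one_ne_zero)

end TraceFiber

theorem natCard_trace_quadratic_eq_zero {K F : Type*} [Field K] [Fintype K] [DecidableEq K]
    [Field F] [Fintype F] [DecidableEq F] [Algebra K F] (hF : ringChar F ≠ 2) {a : F} (ha : a ≠ 0)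
    (b c : F) :
    (Nat.card {α // Algebra.trace K F (a * α ^ 2 + b * α + c) = 0} : ℤ) =
      Fintype.card K ^ (finrank K F - 1) + ∑ γ with Algebra.trace K F (a * γ) =
        Algebra.trace K F (b ^ 2 / (4 * a) - c), quadraticChar F γ := by
  rw [natCard_map_quadratic_eq_zero _ (Ring.two_ne_zero hF) ha, ← Nat.cast_pow,
    ← card_filter_trace_mul_eq_s12 ha, ← card_filter_sq_mem hF]
  simp

/-- for `p` odd, `q = p^m` with `m` odd and `f(x) = ax² + bx + c`
with `a ≠ 0`, the number of `α ∈ F_q` with `Tr(f(α)) = 0` is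
`p^{m-1} + ε p^{(m-1)/2}` for some `ε ∈ {-1, 0, 1}`. -/
theorem stmt_12 (p m : ℕ) (hp : p.Prime) (hodd : p ≠ 2) (hm : Odd m)
    (F : Type*) [Field F] [Fintype F] [Algebra (ZMod p) F]
    (hcard : Fintype.card F = p ^ m) (a b c : F) (ha : a ≠ 0) :
    ∃ ε : ℤ, ε ∈ ({-1, 0, 1} : Set ℤ) ∧
      (Nat.card {α : F // Algebra.trace (ZMod p) F (a * α ^ 2 + b * α + c) = 0} : ℤ)
        = p ^ (m - 1) + ε * p ^ ((m - 1) / 2) := by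
  classical
  have : Fact p.Prime := ⟨hp⟩
  have hF : ringChar F ≠ 2 := by rwa [← Algebra.ringChar_eq (ZMod p) F, ZMod.ringChar_zmod_n]
  have hfinrank : finrank (ZMod p) F = m := by
    rw [card_eq_pow_finrank (K := ZMod p), ZMod.card] at hcard
    exact Nat.pow_right_injective hp.two_le hcard
  have hS := sum_quadraticChar_trace_fiber_sq hF (hfinrank ▸ hm) ha
    (Algebra.trace (ZMod p) F (b ^ 2 / (4 * a) - c))
  rw [natCard_trace_quadratic_eq_zero hF ha, ZMod.card, hfinrank]
  have hm2 : m - 1 = 2 * ((m - 1) / 2) := by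
    obtain ⟨k, rfl⟩ := hm
    omega
  rw [ZMod.card, hfinrank, hm2, pow_mul', ← Nat.cast_pow] at hS
  split_ifs at hS
  · exact ⟨0, by simp, by simpa using hS⟩
  · rcases sq_eq_sq_iff_eq_or_eq_neg.mp hS with h | h
    · exact ⟨1, by simp, by rw [h]; push_cast; ring⟩
    · exact ⟨-1, by simp, by rw [h]; push_cast; ring⟩
end

section
/- Let p be a prime, q = p^m, r < p, and let α_{i_1}, ..., α_{i_t} be distinct elements of F_q^*. The elements 1 + α_{i_1} T, ..., 1 + α_{i_t} T generate the group (F_q[T]/(T^{r+1}))^* / F_q^* (an F_p-vector space of dimension rm) if and only if the rm × t matrix over F_p, whose (k, j)-block column entries are the F_p-coordinate vectors of α_{i_j}^k for 1 ≤ k ≤ r, has rank rm. -/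
/-!
The logarithmic derivative `u ↦ u' / u` is a homomorphism from `(F[T]/(T^{r+1}))ˣ` to the
additive group of `F[T]/(T^r)`. As `1, …, r` are invertible in `F` (this is where `r < p` enters),
its kernel consists exactly of the constants `Fˣ`, and it is surjective because `u' = g u` can be
solved coefficient by coefficient. Hence `G ≅ F[T]/(T^r)`, and the class of `1 + αT` goes to
`α / (1 + αT) = ∑_{k<r} α^{k+1} (-T)^k`. Its coordinates in the `F_p`-basis `γ_i (-T)^k` are
the entries `γ.repr (α^{k+1}) i` of the corresponding column of the matrix, so these classes
generate `G` iff the columns span `F_p^{rm}`, i.e. iff the matrix has rank `rm`.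
-/

open Polynomial
open scoped Nat

theorem Subgroup.closure_range_eq_top_iff_span_eq_top {G V ι : Type*} [Group G]
    [AddCommGroup V] (n : ℕ) [Module (ZMod n) V] (e : G ≃* Multiplicative V) (g : ι → G) :
    Subgroup.closure (Set.range g) = ⊤ ↔
      Submodule.span (ZMod n) (Set.range fun i => (e (g i)).toAdd) = ⊤ := by
  have hmap : (Subgroup.closure (Set.range g)).map e.toMonoidHom
      = Subgroup.closure (Set.range fun i => e (g i)) := by
    rw [MonoidHom.map_closure, ← Set.range_comp]; rfl
  have hadd : (Subgroup.closure (Set.range fun i => e (g i))).toAddSubgroup'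
      = AddSubgroup.closure (Set.range fun i => (e (g i)).toAdd) := by
    rw [Subgroup.toAddSubgroup'_closure]; rfl
  rw [← (Subgroup.map_injective (f := e.toMonoidHom) e.injective).eq_iff,
    Subgroup.map_top_of_surjective _ e.surjective, hmap,
    ← Subgroup.toAddSubgroup'.injective.eq_iff, hadd,
    ← Submodule.restrictScalars_eq_top_iff ℤ,
    Submodule.restrictScalars_span ℤ (ZMod n) ZMod.intCast_surjective,
    ← Submodule.toAddSubgroup_eq_top, Submodule.span_int_eq_addSubgroupClosure]
  rfl

theorem Module.Basis.span_eq_top_iff_rank_toMatrix {K V ι κ : Type*} [Field K]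
    [AddCommGroup V] [Module K V] [Fintype ι] [Fintype κ] [DecidableEq ι]
    (B : Module.Basis ι K V) (w : κ → V) :
    Submodule.span K (Set.range w) = ⊤ ↔ (B.toMatrix w).rank = Fintype.card ι := by
  have hcols : Set.range (B.toMatrix w).col = B.equivFun '' Set.range w := by
    rw [← Set.range_comp]; rfl
  rw [Matrix.rank_eq_finrank_span_cols, hcols, ← LinearEquiv.coe_toLinearMap,
    ← Submodule.map_span, LinearEquiv.finrank_map_eq, ← Module.finrank_eq_card_basis B]
  have := B.finiteDimensional_of_finite
  exact ⟨fun h => by rw [h, finrank_top], Submodule.eq_top_of_finrank_eq⟩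

theorem Nat.cast_ne_zero_of_cast_factorial_ne_zero {K : Type*} [Semiring K] {n k : ℕ}
    (h : (n ! : K) ≠ 0) (hk : 0 < k) (hkn : k ≤ n) : (k : K) ≠ 0 := by
  obtain ⟨c, hc⟩ := Nat.dvd_factorial hk hkn
  intro hk0
  rw [hc, Nat.cast_mul, hk0, zero_mul] at h
  exact h rfl

noncomputable section

namespace Polynomial

abbrev Truncated (R : Type*) [CommRing R] (n : ℕ) := R[X] ⧸ Ideal.span {(X : R[X]) ^ n}

namespace Truncated

section CommRing

variable {R : Type*} [CommRing R] {n : ℕ}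

abbrev mk (n : ℕ) : R[X] →+* Truncated R n := Ideal.Quotient.mk _

theorem mk_eq_zero_iff {f : R[X]} : mk n f = 0 ↔ ∀ d < n, f.coeff d = 0 := by
  rw [Ideal.Quotient.eq_zero_iff_mem, Ideal.mem_span_singleton, X_pow_dvd_iff]

theorem mk_eq_mk_iff {f g : R[X]} : mk n f = mk n g ↔ ∀ d < n, f.coeff d = g.coeff d := by
  simp only [← sub_eq_zero (a := f.coeff _), ← coeff_sub, ← mk_eq_zero_iff, map_sub,
    sub_eq_zero]

theorem smul_mk (a : R) (f : R[X]) : a • mk n f = mk n (C a * f) := by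
  rw [← smul_eq_C_mul]
  rfl

theorem isUnit_mk_of_coeff_zero_eq_one {f : R[X]} (hf : f.coeff 0 = 1) : IsUnit (mk n f) := by
  have hnil : IsNilpotent (mk n (f - 1)) := by
    refine ⟨n, ?_⟩
    rw [← map_pow, Ideal.Quotient.eq_zero_iff_mem, Ideal.mem_span_singleton]
    exact pow_dvd_pow_of_dvd (X_dvd_iff.mpr (by rw [coeff_sub, coeff_one_zero, hf, sub_self])) n
  simpa using hnil.isUnit_one_add

-- Instance search does not find this through the ring structure of the quotient.
instance : IsMulCommutative (Truncated R n)ˣ :=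
  ⟨⟨fun u v => Units.ext (mul_comm (u : Truncated R n) v)⟩⟩

instance [Nontrivial R] : Nontrivial (Truncated R (n + 1)) :=
  nontrivial_of_ne (mk (n + 1) 1) 0 fun h => by simpa using mk_eq_zero_iff.mp h 0 n.succ_pos

variable (R n) in
def truncate : Truncated R (n + 1) →+* Truncated R n :=
  Ideal.Quotient.factor <| Ideal.span_singleton_le_span_singleton.mpr (pow_dvd_pow X n.le_succ)

@[simp]
theorem truncate_mk (f : R[X]) : truncate R n (mk (n + 1) f) = mk n f :=
  Ideal.Quotient.factor_mk _ _

theorem truncate_mul_truncate_inv (u : (Truncated R (n + 1))ˣ) :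
    truncate R n u * truncate R n ↑u⁻¹ = 1 := by
  rw [← map_mul, Units.mul_inv, map_one]

def deriv (x : Truncated R (n + 1)) : Truncated R n := mk n (derivative x.out)

theorem deriv_mk (f : R[X]) : deriv (mk (n + 1) f) = mk n (derivative f) := by
  have hout : mk (n + 1) (mk (n + 1) f).out = mk (n + 1) f := Quotient.out_eq _
  rw [mk_eq_mk_iff] at hout
  refine mk_eq_mk_iff.mpr fun d hd => ?_
  rw [coeff_derivative, coeff_derivative, hout (d + 1) (by omega)]

theorem deriv_mul (x y : Truncated R (n + 1)) :
    deriv (x * y) = deriv x * truncate R n y + truncate R n x * deriv y := by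
  obtain ⟨f, rfl⟩ := Ideal.Quotient.mk_surjective x
  obtain ⟨g, rfl⟩ := Ideal.Quotient.mk_surjective y
  rw [← map_mul, deriv_mk, deriv_mk, deriv_mk, derivative_mul, truncate_mk, truncate_mk, map_add,
    map_mul, map_mul]

theorem deriv_algebraMap (c : R) : deriv (algebraMap R (Truncated R (n + 1)) c) = 0 := by
  rw [← Ideal.Quotient.mk_algebraMap, Polynomial.algebraMap_eq, deriv_mk, derivative_C, map_zero]

def logDeriv : (Truncated R (n + 1))ˣ →* Multiplicative (Truncated R n) where
  toFun u := Multiplicative.ofAdd (deriv (u : Truncated R (n + 1)) * truncate R n ↑u⁻¹)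
  map_one' := by
    rw [Units.val_one, ← map_one (algebraMap R (Truncated R (n + 1))), deriv_algebraMap, zero_mul]
    rfl
  map_mul' u v := congrArg Multiplicative.ofAdd <| by
    rw [Units.val_mul, deriv_mul, mul_inv_rev, Units.val_mul, map_mul, toAdd_ofAdd, toAdd_ofAdd]
    linear_combination deriv (u : Truncated R (n + 1)) * truncate R n ↑u⁻¹ *
      truncate_mul_truncate_inv v + deriv (v : Truncated R (n + 1)) * truncate R n ↑v⁻¹ *
      truncate_mul_truncate_inv u

theorem logDeriv_eq_ofAdd_iff (u : (Truncated R (n + 1))ˣ) (y : Truncated R n) :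
    logDeriv u = .ofAdd y ↔ deriv (u : Truncated R (n + 1)) = y * truncate R n u :=
  Multiplicative.ofAdd.apply_eq_iff_eq.trans
    (Units.mul_inv_eq_iff_eq_mul (Units.map (truncate R n).toMonoidHom u))

theorem logDeriv_algebraMap (c : Rˣ) :
    logDeriv (Units.map (algebraMap R (Truncated R (n + 1))).toMonoidHom c) = 1 := by
  rw [← ofAdd_zero, logDeriv_eq_ofAdd_iff, zero_mul]
  exact deriv_algebraMap (c : R)

theorem logDeriv_one_add_C_mul_X (a : R) (u : (Truncated R (n + 1))ˣ)
    (hu : (u : Truncated R (n + 1)) = mk (n + 1) (1 + C a * X)) :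
    logDeriv u = .ofAdd (∑ k ∈ Finset.range n, a ^ (k + 1) • mk n ((-X) ^ k)) := by
  rw [logDeriv_eq_ofAdd_iff, hu, deriv_mk, truncate_mk, derivative_add, derivative_one,
    derivative_C_mul_X, zero_add]
  have hsum : ∑ k ∈ Finset.range n, a ^ (k + 1) • mk n ((-X) ^ k)
      = mk n (C a * ∑ k ∈ Finset.range n, (-(C a * X)) ^ k) := by
    simp only [Finset.mul_sum, map_sum, smul_mk]
    refine Finset.sum_congr rfl fun k _ => congrArg (mk n) ?_
    rw [neg_mul_eq_mul_neg, mul_pow, C_pow]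
    ring
  have hgeom := mul_neg_geom_sum (-(C a * X)) n
  have hXn : mk n ((-(C a * X)) ^ n) = 0 := by
    rw [Ideal.Quotient.eq_zero_iff_mem, Ideal.mem_span_singleton, neg_pow, mul_pow]
    exact (dvd_mul_left _ _).mul_left _
  rw [hsum, ← map_mul, show C a * (∑ k ∈ Finset.range n, (-(C a * X)) ^ k) * (1 + C a * X)
    = C a - C a * (-(C a * X)) ^ n by linear_combination C a * hgeom, map_sub, map_mul, hXn,
    mul_zero, sub_zero]

variable [Nontrivial R]

variable (R n) in
def basisXPow : Module.Basis (Fin n) R (Truncated R n) :=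
  (AdjoinRoot.powerBasis' (monic_X_pow (R := R) n)).basis.reindex
    (finCongr (by rw [AdjoinRoot.powerBasis'_dim, natDegree_X_pow]))

theorem basisXPow_apply (k : Fin n) : basisXPow R n k = mk n (X ^ (k : ℕ)) := by
  have h := Module.Basis.reindex_apply (AdjoinRoot.powerBasis' (monic_X_pow (R := R) n)).basis
    (finCongr (by rw [AdjoinRoot.powerBasis'_dim, natDegree_X_pow])) k
  rw [PowerBasis.basis_eq_pow, AdjoinRoot.powerBasis'_gen] at h
  exact h.trans (map_pow (mk n) X k).symm

variable (R n) in
def basisNegXPow : Module.Basis (Fin n) R (Truncated R n) :=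
  (basisXPow R n).unitsSMul fun k => (-1) ^ (k : ℕ)

theorem basisNegXPow_apply (k : Fin n) : basisNegXPow R n k = mk n ((-X) ^ (k : ℕ)) := by
  rw [basisNegXPow, Module.Basis.unitsSMul_apply, basisXPow_apply, Units.smul_def,
    Units.val_pow_eq_pow_val, Units.val_neg, Units.val_one, smul_mk, C_pow, C_neg, C_1,
    neg_pow (X : R[X])]

end CommRing

section Field

variable {F : Type*} [Field F] {n : ℕ}

theorem mem_range_of_logDeriv_eq_one (hn : (n ! : F) ≠ 0) {u : (Truncated F (n + 1))ˣ}
    (hu : logDeriv u = 1) :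
    u ∈ (Units.map (algebraMap F (Truncated F (n + 1))).toMonoidHom).range := by
  obtain ⟨f, hf⟩ := Ideal.Quotient.mk_surjective (u : Truncated F (n + 1))
  rw [← ofAdd_zero, logDeriv_eq_ofAdd_iff, zero_mul, ← hf, deriv_mk, mk_eq_zero_iff] at hu
  have hconst : mk (n + 1) f = algebraMap F _ (f.coeff 0) := by
    rw [← Ideal.Quotient.mk_algebraMap, Polynomial.algebraMap_eq, mk_eq_mk_iff]
    rintro (_ | d) hd
    · rw [coeff_C_zero]
    · have hd' : ((d + 1 : ℕ) : F) ≠ 0 :=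
        Nat.cast_ne_zero_of_cast_factorial_ne_zero hn d.succ_pos (by omega)
      rw [coeff_C_succ]
      push_cast at hd'
      exact (mul_eq_zero.mp (coeff_derivative f d ▸ hu d (by omega))).resolve_right hd'
  have hc : f.coeff 0 ≠ 0 := fun h0 => u.ne_zero (by rw [← hf, hconst, h0, map_zero])
  exact ⟨Units.mk0 _ hc, Units.ext <| by rw [← hf, hconst]; rfl⟩

/-- The coefficients of the power series solution of `U' = g U`, `U 0 = 1`. -/
def expIntegralCoeff (g : F[X]) : ℕ → F
  | 0 => 1
  | k + 1 => ((k + 1 : ℕ) : F)⁻¹ *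
      ∑ i ∈ Finset.range (k + 1), g.coeff i * expIntegralCoeff g (k - i)

theorem exists_coeff_zero_eq_one_and_mk_derivative_eq (hn : (n ! : F) ≠ 0) (g : F[X]) :
    ∃ U : F[X], U.coeff 0 = 1 ∧ mk n (derivative U) = mk n (g * U) := by
  set U := PowerSeries.trunc (n + 1) (PowerSeries.mk (expIntegralCoeff g))
  have hU : ∀ d ≤ n, U.coeff d = expIntegralCoeff g d := fun d hd => by
    rw [PowerSeries.coeff_trunc, if_pos (by omega), PowerSeries.coeff_mk]
  refine ⟨U, (hU 0 n.zero_le).trans (by rw [expIntegralCoeff]), mk_eq_mk_iff.mpr fun d hd => ?_⟩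
  have hd' : ((d + 1 : ℕ) : F) ≠ 0 :=
    Nat.cast_ne_zero_of_cast_factorial_ne_zero hn d.succ_pos hd
  rw [coeff_derivative, coeff_mul, Finset.Nat.sum_antidiagonal_eq_sum_range_succ_mk,
    Finset.sum_congr rfl fun i _ => by rw [hU (d - i) (by omega)], hU (d + 1) hd, expIntegralCoeff]
  push_cast at hd' ⊢
  field_simp

theorem logDeriv_surjective (hn : (n ! : F) ≠ 0) :
    Function.Surjective (logDeriv (R := F) (n := n)) := by
  intro y
  obtain ⟨g, hg⟩ := Ideal.Quotient.mk_surjective y.toAdd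
  obtain ⟨U, hU0, hU⟩ := exists_coeff_zero_eq_one_and_mk_derivative_eq hn g
  refine ⟨(isUnit_mk_of_coeff_zero_eq_one hU0).unit, ?_⟩
  rw [← ofAdd_toAdd y, ← hg, logDeriv_eq_ofAdd_iff, IsUnit.unit_spec, deriv_mk, truncate_mk,
    ← map_mul, hU]

theorem ker_logDeriv (hn : (n ! : F) ≠ 0) :
    (logDeriv (R := F) (n := n)).ker =
      (Units.map (algebraMap F (Truncated F (n + 1))).toMonoidHom).range :=
  le_antisymm (fun _ hu => mem_range_of_logDeriv_eq_one hn hu)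
    (by rintro _ ⟨c, rfl⟩; exact logDeriv_algebraMap c)

def unitsQuotientEquiv (hn : (n ! : F) ≠ 0) :
    (Truncated F (n + 1))ˣ ⧸ (Units.map (algebraMap F (Truncated F (n + 1))).toMonoidHom).range
      ≃* Multiplicative (Truncated F n) :=
  (QuotientGroup.quotientMulEquivOfEq (ker_logDeriv hn).symm).trans
    (QuotientGroup.quotientKerEquivOfSurjective _ (logDeriv_surjective hn))

theorem unitsQuotientEquiv_mk (hn : (n ! : F) ≠ 0) (u : (Truncated F (n + 1))ˣ) :
    unitsQuotientEquiv hn u = logDeriv u :=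
  rfl

end Field

end Truncated

end Polynomial

end

theorem stmt_18_general (p m r t : ℕ) [Fact p.Prime] (hrp : r < p)
    (F : Type*) [Field F] [Algebra (ZMod p) F]
    (γ : Module.Basis (Fin m) (ZMod p) F)
    (α : Fin t → F) :
    letI R := Polynomial F ⧸ Ideal.span {(Polynomial.X : Polynomial F) ^ (r + 1)}
    letI N : Subgroup Rˣ := (Units.map (algebraMap F R).toMonoidHom).range
    haveI : N.Normal := @Subgroup.normal_of_isMulCommutative _ _ ⟨⟨fun a b => Units.ext (mul_comm (a : R) b)⟩⟩ N
    ∀ u : Fin t → Rˣ,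
      (∀ j, (u j : R) = Ideal.Quotient.mk (Ideal.span {(Polynomial.X : Polynomial F) ^ (r + 1)})
          (1 + Polynomial.C (α j) * Polynomial.X)) →
      (Subgroup.closure (Set.range fun j => QuotientGroup.mk (s := N) (u j)) = ⊤ ↔
        (Matrix.of fun ki : Fin r × Fin m => fun j : Fin t =>
            γ.repr (α j ^ ((ki.1 : ℕ) + 1)) ki.2).rank = r * m) := by
  intro u hu
  have : CharP F p := charP_of_injective_ringHom (algebraMap (ZMod p) F).injective p
  have hr : (r ! : F) ≠ 0 := by
    rw [Ne, CharP.cast_eq_zero_iff F p, Nat.Prime.dvd_factorial Fact.out]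
    omega
  let e := Truncated.basisNegXPow F r
  let b := (γ.smulTower e).reindex (Equiv.prodComm _ _)
  let w : Fin t → Truncated F r := fun j => ∑ k : Fin r, α j ^ ((k : ℕ) + 1) • e k
  have hlog : ∀ j, (Truncated.unitsQuotientEquiv hr (u j)).toAdd = w j := fun j => by
    rw [Truncated.unitsQuotientEquiv_mk, Truncated.logDeriv_one_add_C_mul_X (α j) (u j) (hu j),
      toAdd_ofAdd, Finset.sum_range]
    simp only [w, e, Truncated.basisNegXPow_apply]
  have hmatrix : b.toMatrix w = Matrix.of fun ki : Fin r × Fin m => fun j : Fin t =>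
      γ.repr (α j ^ ((ki.1 : ℕ) + 1)) ki.2 := by
    ext ⟨k, i⟩ j
    simp only [b, w, Module.Basis.toMatrix_apply, Module.Basis.repr_reindex_apply,
      Module.Basis.smulTower_repr, Module.Basis.repr_sum_self]
    rfl
  rw [Subgroup.closure_range_eq_top_iff_span_eq_top p (Truncated.unitsQuotientEquiv hr),
    funext hlog, b.span_eq_top_iff_rank_toMatrix, hmatrix, Fintype.card_prod, Fintype.card_fin,
    Fintype.card_fin]

/-- the classes of `1 + α_{i_j} T` generate the group
`(F_q[T]/(T^{r+1}))^* / F_q^*` (an `F_p`-vector space of dimension `rm`)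
iff the `rm × t` matrix of `F_p`-coordinate vectors of the powers `α_{i_j}^k`
(`1 ≤ k ≤ r`) has rank `rm`. -/
theorem stmt_18 (p m r t : ℕ) [Fact p.Prime] (hm : 0 < m) (hr : 0 < r) (hrp : r < p)
    (F : Type*) [Field F] [Fintype F] [Algebra (ZMod p) F] (hcard : Fintype.card F = p ^ m)
    (γ : Module.Basis (Fin m) (ZMod p) F)
    (α : Fin t → F) (hα : Function.Injective α) (hα0 : ∀ j, α j ≠ 0) :
    letI R := Polynomial F ⧸ Ideal.span {(Polynomial.X : Polynomial F) ^ (r + 1)}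
    letI N : Subgroup Rˣ := (Units.map (algebraMap F R).toMonoidHom).range
    haveI : N.Normal := @Subgroup.normal_of_isMulCommutative _ _ ⟨⟨fun a b => Units.ext (mul_comm (a : R) b)⟩⟩ N
    ∀ u : Fin t → Rˣ,
      (∀ j, (u j : R) = Ideal.Quotient.mk (Ideal.span {(Polynomial.X : Polynomial F) ^ (r + 1)})
          (1 + Polynomial.C (α j) * Polynomial.X)) →
      (Subgroup.closure (Set.range fun j => QuotientGroup.mk (s := N) (u j)) = ⊤ ↔
        (Matrix.of fun ki : Fin r × Fin m => fun j : Fin t =>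
            γ.repr (α j ^ ((ki.1 : ℕ) + 1)) ki.2).rank = r * m) :=
  stmt_18_general p m r t hrp F γ α
end
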